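/- arXiv:2207.14599 — 5 statements merged into one kernel-verified Lean document; each statement's English description precedes it below -/
import Mathlib

section
/- For every pair of positive integers k and r there exists a positive integer N₀ such that for every N ≥ N₀, every alphabet Λ with k elements, and every r-coloring of Λ^N, there exists a variable word w(v) of length N over Λ (a function from {0,...,N-1} to Λ ∪ {v} in which v occurs at least once) such that the combinatorial line {w(a) : a ∈ Λ} is monochromatic. -/
/-- **Hales–Jewett theorem.** A variable word of length `N` over `Λ` is encoded as
`w : Fin N → Option Λ`, where `none` denotes an occurrence of the variable `v` (which
must occur at least once); `w(a)` is `fun j => (w j).getD a`. -/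
theorem hales_jewett (k r : ℕ) (hk : 0 < k) (hr : 0 < r) :
    ∃ N₀ : ℕ, 0 < N₀ ∧ ∀ N : ℕ, N₀ ≤ N →
      ∀ (Λ : Type) [Fintype Λ], Fintype.card Λ = k →
      ∀ c : (Fin N → Λ) → Fin r,
      ∃ w : Fin N → Option Λ, (∃ j, w j = none) ∧
        ∀ a a' : Λ, c (fun j => (w j).getD a) = c (fun j => (w j).getD a') := by
  obtain ⟨ι, ιfin, hι⟩ := Combinatorics.Line.exists_mono_in_high_dimension (Fin k) (Fin r)
  set n := Fintype.card ι with hn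
  refine ⟨max n 1, lt_of_lt_of_le one_pos (le_max_right _ _), ?_⟩
  intro N hN Λ _ hΛ c
  have hnN : n ≤ N := le_trans (le_max_left _ _) hN
  have e : Λ ≃ Fin k := Fintype.equivFinOfCardEq hΛ
  have eqv : ι ≃ Fin n := Fintype.equivFinOfCardEq rfl
  -- the coloring on ι → Fin k
  set a₀ : Fin k := ⟨0, hk⟩ with ha₀
  set C : (ι → Fin k) → Fin r := fun x =>
    c (fun j => if h : (j : ℕ) < n then e.symm (x (eqv.symm ⟨j, h⟩)) else e.symm a₀) with hC
  obtain ⟨l, c₀, hmono⟩ := hι C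
  set w : Fin N → Option Λ := fun j =>
    if h : (j : ℕ) < n then (l.idxFun (eqv.symm ⟨j, h⟩)).map e.symm else some (e.symm a₀)
    with hw
  have key : ∀ a : Λ, c (fun j => (w j).getD a) = c₀ := by
    intro a
    have := hmono (e a)
    rw [← this]
    congr 1
    funext j
    by_cases h : (j : ℕ) < n
    · simp only [hw, hC, dif_pos h]
      cases hidx : l.idxFun (eqv.symm ⟨j, h⟩) with
      | none => simp [Combinatorics.Line.coe_apply, hidx]
      | some b => simp [Combinatorics.Line.coe_apply, hidx]
    · simp [hw, hC, dif_neg h]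
  obtain ⟨i, hi⟩ := l.proper
  refine ⟨w, ⟨⟨(eqv i : ℕ), lt_of_lt_of_le (eqv i).2 hnN⟩, ?_⟩, fun a a' => by rw [key a, key a']⟩
  simp [hw, (eqv i).2, hi]
end

section
/- For every triple of positive integers k, m, r there exists a positive integer N₀ such that for every N ≥ N₀, every alphabet Λ with k elements, and every r-coloring of Λ^N, there exists an m-dimensional variable word w(v₀,...,v_{m-1}) of length N over Λ such that the m-dimensional combinatorial subspace {w(a₀,...,a_{m-1}) : a₀,...,a_{m-1} ∈ Λ} is monochromatic. -/
namespace DR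

/-- Substitution of letters into an `m`-dimensional variable word. -/
def subst {N m : ℕ} {Λ : Type} (w : Fin N → Λ ⊕ Fin m) (a : Fin m → Λ) : Fin N → Λ :=
  fun j => Sum.elim id a (w j)

/-- `w` is an `m`-dimensional variable word of length `N` over `Λ`: every variable occurs
and the wildcard sets are in block position. -/
def IsVarWordM {N m : ℕ} {Λ : Type} (w : Fin N → Λ ⊕ Fin m) : Prop :=
  (∀ i : Fin m, ∃ j, w j = Sum.inr i) ∧
  (∀ (j j' : Fin N) (i i' : Fin m),
    w j = Sum.inr i → w j' = Sum.inr i' → i < i' → j < j')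

/-- `j` is the first occurrence `ℓ^w_i` of the variable `v_i` in `w`. -/
def IsFirstOcc {N m : ℕ} {Λ : Type} (w : Fin N → Λ ⊕ Fin m) (i : Fin m) (j : Fin N) : Prop :=
  w j = Sum.inr i ∧ ∀ j' : Fin N, w j' = Sum.inr i → j ≤ j'

open Combinatorics in
/-- Line Hales–Jewett with `Fin n` index type. -/
lemma line_hj (k : ℕ) (κ : Type) [Finite κ] :
    ∃ n : ℕ, ∀ C : (Fin n → Fin k) → κ,
      ∃ l : Line (Fin k) (Fin n), l.IsMono C := by
  obtain ⟨ι, _inst, hι⟩ := Line.exists_mono_in_high_dimension (Fin k) κ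
  refine ⟨Fintype.card ι, fun C => ?_⟩
  set e := Fintype.equivFin ι with he
  obtain ⟨l, c, hc⟩ := hι (fun x => C (x ∘ e.symm))
  refine ⟨⟨fun j => l.idxFun (e.symm j), ?_⟩, c, fun x => ?_⟩
  · obtain ⟨i, hi⟩ := l.proper
    exact ⟨e i, by simpa using hi⟩
  · exact hc x

/-- Fixed-length block HJ over `Fin k`. -/
lemma auxFin (k : ℕ) (hk : 0 < k) (m : ℕ) : ∀ r : ℕ,
    ∃ N₀ : ℕ, 0 < N₀ ∧ ∀ c : (Fin N₀ → Fin k) → Fin r,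
      ∃ w : Fin N₀ → Fin k ⊕ Fin m, IsVarWordM w ∧
        ∀ a a' : Fin m → Fin k, c (subst w a) = c (subst w a') := by
  induction m with
  | zero =>
    intro r
    refine ⟨1, one_pos, fun c => ⟨fun _ => Sum.inl ⟨0, hk⟩, ⟨fun i => i.elim0, fun j j' i => i.elim0⟩, fun a a' => rfl⟩⟩
  | succ m ih =>
    intro r
    obtain ⟨N₁, hN₁, hIH⟩ := ih r
    obtain ⟨n, hn⟩ := line_hj k ((Fin N₁ → Fin k) → Fin r)
    refine ⟨N₁ + n, by omega, fun c => ?_⟩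
    -- glue function
    set glue : (Fin N₁ → Fin k) → (Fin n → Fin k) → Fin (N₁ + n) → Fin k :=
      fun x y j => if h : (j : ℕ) < N₁ then x ⟨j, h⟩ else y ⟨(j : ℕ) - N₁, by omega⟩ with hglue
    obtain ⟨l, c₀, hl⟩ := hn (fun y x => c (glue x y))
    -- hl : ∀ z : Fin k, (fun x => c (glue x (l z))) = c₀
    have hmono : ∀ (z : Fin k) (x : Fin N₁ → Fin k), c (glue x (l z)) = c₀ x := by
      intro z x; exact congrFun (hl z) x
    obtain ⟨w₁, ⟨hocc₁, hord₁⟩, hmono₁⟩ := hIH c₀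
    set w : Fin (N₁ + n) → Fin k ⊕ Fin (m + 1) := fun j =>
      if h : (j : ℕ) < N₁ then Sum.map id Fin.castSucc (w₁ ⟨j, h⟩)
      else match l.idxFun ⟨(j : ℕ) - N₁, by omega⟩ with
        | some b => Sum.inl b
        | none => Sum.inr (Fin.last m) with hw
    have hsubst : ∀ a : Fin (m + 1) → Fin k,
        subst w a = glue (subst w₁ (a ∘ Fin.castSucc)) (l (a (Fin.last m))) := by
      intro a
      funext j
      simp only [subst, hw, hglue]
      by_cases h : (j : ℕ) < N₁
      · simp only [dif_pos h]
        cases w₁ ⟨j, h⟩ <;> rfl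
      · simp only [dif_neg h]
        rcases hb : l.idxFun ⟨(j : ℕ) - N₁, by omega⟩ with _ | b
        · simp [Combinatorics.Line.coe_apply, hb]
        · simp [Combinatorics.Line.coe_apply, hb]
    refine ⟨w, ⟨?_, ?_⟩, ?_⟩
    · -- every variable occurs
      intro i
      rcases Fin.eq_castSucc_or_eq_last i with ⟨i', rfl⟩ | rfl
      · obtain ⟨j, hj⟩ := hocc₁ i'
        refine ⟨⟨(j : ℕ), by omega⟩, ?_⟩
        simp only [hw, dif_pos j.isLt]
        have : (⟨((⟨(j : ℕ), by omega⟩ : Fin (N₁ + n)) : ℕ), j.isLt⟩ : Fin N₁) = j := rfl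
        rw [this, hj]; rfl
      · obtain ⟨j, hj⟩ := l.proper
        refine ⟨⟨N₁ + (j : ℕ), by omega⟩, ?_⟩
        have h1 : ¬ ((⟨N₁ + (j : ℕ), by omega⟩ : Fin (N₁ + n)) : ℕ) < N₁ := by simp
        simp only [hw, dif_neg h1]
        have : (⟨N₁ + (j : ℕ) - N₁, by omega⟩ : Fin n) = j := by
          ext; simp
        rw [this, hj]
    · -- block position
      intro j j' i i' hji hji' hii'
      by_cases h : (j : ℕ) < N₁
      · by_cases h' : (j' : ℕ) < N₁
        · simp only [hw, dif_pos h] at hji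
          simp only [hw, dif_pos h'] at hji'
          rcases hb : w₁ ⟨j, h⟩ with b | i₁
          · rw [hb] at hji; exact absurd hji (by simp)
          · rcases hb' : w₁ ⟨j', h'⟩ with b | i₁'
            · rw [hb'] at hji'; exact absurd hji' (by simp)
            · rw [hb] at hji; rw [hb'] at hji'
              rw [Sum.map_inr] at hji hji'
              have e1 : i = Fin.castSucc i₁ := (Sum.inr_injective hji).symm
              have e2 : i' = Fin.castSucc i₁' := (Sum.inr_injective hji').symm
              have : i₁ < i₁' := by
                rw [e1, e2] at hii'; exact_mod_cast hii'
              have := hord₁ ⟨j, h⟩ ⟨j', h'⟩ i₁ i₁' hb hb' this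
              exact Fin.lt_def.mpr (Fin.lt_def.mp this)
        · exact Fin.lt_def.mpr (by omega)
      · -- j in the right block ⇒ i = last m, contradiction with i < i'
        exfalso
        simp only [hw, dif_neg h] at hji
        rcases hb : l.idxFun ⟨(j : ℕ) - N₁, by omega⟩ with _ | b
        · rw [hb] at hji
          simp only at hji
          have : i = Fin.last m := by injection hji with h2; exact h2.symm
          rw [this] at hii'
          exact absurd hii' (by simp [Fin.le_last, not_lt, Fin.le_def, Fin.lt_def]; omega)
        · rw [hb] at hji; exact absurd hji (by simp)
    · -- monochromatic
      intro a a'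
      rw [hsubst a, hsubst a', hmono, hmono, hmono₁ (a ∘ Fin.castSucc) (a' ∘ Fin.castSucc)]

/-- **Multidimensional Hales–Jewett theorem.** -/
theorem multidim_hales_jewett (k m r : ℕ) (hk : 0 < k) (hm : 0 < m) (hr : 0 < r) :
    ∃ N₀ : ℕ, 0 < N₀ ∧ ∀ N : ℕ, N₀ ≤ N →
      ∀ (Λ : Type) [Fintype Λ], Fintype.card Λ = k →
      ∀ c : (Fin N → Λ) → Fin r,
      ∃ w : Fin N → Λ ⊕ Fin m, IsVarWordM w ∧
        ∀ a a' : Fin m → Λ, c (subst w a) = c (subst w a') := by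
  obtain ⟨N₀, hN₀, haux⟩ := auxFin k hk m r
  refine ⟨N₀, hN₀, fun N hN Λ _ hΛ c => ?_⟩
  have e : Λ ≃ Fin k := Fintype.equivFinOfCardEq hΛ
  set lam0 : Λ := e.symm ⟨0, hk⟩ with hlam0
  set pad : (Fin N₀ → Fin k) → Fin N → Λ :=
    fun x j => if h : (j : ℕ) < N₀ then e.symm (x ⟨j, h⟩) else lam0 with hpad
  obtain ⟨w₀, ⟨hocc₀, hord₀⟩, hmono₀⟩ := haux (fun x => c (pad x))
  set w : Fin N → Λ ⊕ Fin m := fun j =>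
    if h : (j : ℕ) < N₀ then Sum.map e.symm id (w₀ ⟨j, h⟩) else Sum.inl lam0 with hw
  have hsubst : ∀ a : Fin m → Λ, subst w a = pad (subst w₀ (e ∘ a)) := by
    intro a
    funext j
    simp only [subst, hw, hpad]
    by_cases h : (j : ℕ) < N₀
    · simp only [dif_pos h]
      cases hb : w₀ ⟨j, h⟩ with
      | inl b => rfl
      | inr i => simp [Sum.map_inr, Sum.elim_inr]
    · simp only [dif_neg h]; rfl
  refine ⟨w, ⟨?_, ?_⟩, ?_⟩
  · intro i
    obtain ⟨j, hj⟩ := hocc₀ i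
    refine ⟨⟨(j : ℕ), lt_of_lt_of_le j.isLt hN⟩, ?_⟩
    simp only [hw, dif_pos j.isLt]
    have : (⟨((⟨(j : ℕ), lt_of_lt_of_le j.isLt hN⟩ : Fin N) : ℕ), j.isLt⟩ : Fin N₀) = j := rfl
    rw [this, hj, Sum.map_inr]; rfl
  · intro j j' i i' hji hji' hii'
    simp only [hw] at hji hji'
    by_cases h : (j : ℕ) < N₀
    · by_cases h' : (j' : ℕ) < N₀
      · rw [dif_pos h] at hji
        rw [dif_pos h'] at hji'
        rcases hb : w₀ ⟨j, h⟩ with b | i₁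
        · rw [hb, Sum.map_inl] at hji; exact absurd hji (by simp)
        · rcases hb' : w₀ ⟨j', h'⟩ with b | i₁'
          · rw [hb', Sum.map_inl] at hji'; exact absurd hji' (by simp)
          · rw [hb, Sum.map_inr] at hji
            rw [hb', Sum.map_inr] at hji'
            have e1 : i₁ = i := Sum.inr_injective hji
            have e2 : i₁' = i' := Sum.inr_injective hji'
            have := hord₀ ⟨j, h⟩ ⟨j', h'⟩ i₁ i₁' hb hb' (by rw [e1, e2]; exact hii')
            exact Fin.lt_def.mpr (Fin.lt_def.mp this)
      · rw [dif_neg h'] at hji'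
        exact absurd hji' (by simp)
    · rw [dif_neg h] at hji
      exact absurd hji (by simp)
  · intro a a'
    rw [hsubst a, hsubst a']
    exact hmono₀ (e ∘ a) (e ∘ a')

end DR
end

section
/- For every positive integers k, m, r there exists a positive integer n₀ with the following property: for every n ≥ n₀ and every r-coloring of DS_k(n), there exists F in DS_m(n) such that the set DS_k(F) is monochromatic. -/
namespace DR

/-! ### Parameter words -/

/-- Composition of parameter words. -/
def comp {A : Type} {n m k : ℕ} (w : Fin n → A ⊕ Fin m) (u : Fin m → A ⊕ Fin k) :
    Fin n → A ⊕ Fin k := fun p => Sum.elim Sum.inl u (w p)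

/-- Legality of a parameter word: every parameter occurs, and whenever a parameter occurs,
all smaller parameters occur at earlier-or-equal positions. -/
def Legal {A : Type} {n k : ℕ} (w : Fin n → A ⊕ Fin k) : Prop :=
  (∀ j : Fin k, ∃ p, w p = Sum.inr j) ∧
  (∀ (p : Fin n) (j j' : Fin k), w p = Sum.inr j → j' ≤ j → ∃ q, q ≤ p ∧ w q = Sum.inr j')

theorem comp_assoc {A : Type} {n m k l : ℕ} (w : Fin n → A ⊕ Fin m) (u : Fin m → A ⊕ Fin k)
    (v : Fin k → A ⊕ Fin l) : comp (comp w u) v = comp w (comp u v) := by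
  funext p
  simp only [comp]
  cases w p <;> simp [comp]

theorem Legal.comp {A : Type} {n m k : ℕ} {w : Fin n → A ⊕ Fin m} {u : Fin m → A ⊕ Fin k}
    (hw : Legal w) (hu : Legal u) : Legal (comp w u) := by
  constructor
  · intro j
    obtain ⟨i, hi⟩ := hu.1 j
    obtain ⟨p, hp⟩ := hw.1 i
    exact ⟨p, by simp [DR.comp, hp, hi]⟩
  · intro p j j' hpj hle
    rcases hwp : w p with a | i
    · simp [DR.comp, hwp] at hpj
    · have hui : u i = Sum.inr j := by simpa [DR.comp, hwp] using hpj
      obtain ⟨i', hi'le, hi'⟩ := hu.2 i j j' hui hle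
      obtain ⟨q, hqle, hq⟩ := hw.2 p i i' hwp hi'le
      exact ⟨q, hqle, by simp [DR.comp, hq, hi']⟩

/-- The tail of a legal word whose head is a letter is legal. -/
theorem Legal.tail {A : Type} {n k : ℕ} {v : Fin (n + 1) → A ⊕ Fin k} (hv : Legal v)
    {a : A} (h0 : v 0 = Sum.inl a) : Legal (fun i : Fin n => v i.succ) := by
  constructor
  · intro j
    obtain ⟨p, hp⟩ := hv.1 j
    rcases Fin.eq_zero_or_eq_succ p with rfl | ⟨q, rfl⟩
    · rw [h0] at hp; exact absurd hp (by simp)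
    · exact ⟨q, hp⟩
  · intro p j j' hpj hle
    obtain ⟨q, hqle, hq⟩ := hv.2 p.succ j j' hpj hle
    rcases Fin.eq_zero_or_eq_succ q with rfl | ⟨q', rfl⟩
    · rw [h0] at hq; exact absurd hq (by simp)
    · exact ⟨q', by simpa using hqle, hq⟩

/-! ### Hales–Jewett in packaged form -/

theorem exists_hj (A κ : Type) [Fintype A] [Inhabited A] [Fintype κ] :
    ∃ H : ℕ, ∀ c : (Fin H → A) → κ,
      ∃ (S : Finset (Fin H)) (f : Fin H → A) (e : κ), S.Nonempty ∧
        ∀ ξ : A, c (fun p => if p ∈ S then ξ else f p) = e := by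
  classical
  obtain ⟨H, hH⟩ := Combinatorics.Subspace.exists_mono_in_high_dimension_fin A κ Unit
  refine ⟨H, fun c => ?_⟩
  obtain ⟨l, e, he⟩ := hH c
  refine ⟨Finset.univ.filter (fun p => l.idxFun p = Sum.inr ()),
    fun p => (l.idxFun p).elim id (fun _ => default), e, ?_, fun ξ => ?_⟩
  · obtain ⟨i, hi⟩ := l.proper ()
    exact ⟨i, by simp [hi]⟩
  · have : (fun p => if p ∈ Finset.univ.filter (fun p => l.idxFun p = Sum.inr ()) then ξ
        else (l.idxFun p).elim id (fun _ => default)) = l (fun _ => ξ) := by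
      funext p
      rcases h : l.idxFun p with a | u
      · simp [Combinatorics.Subspace.coe_apply, h, Finset.mem_filter]
      · cases u; simp [Combinatorics.Subspace.coe_apply, h, Finset.mem_filter]
    rw [this]; exact he _

/-! ### Prefix Hales–Jewett -/

/-- Fill a template: letters stay, block `j` gets `v j`. -/
def fill {A : Type} {M : ℕ} (τ : ℕ → A ⊕ Fin M) (v : Fin M → A) : ℕ → A :=
  fun p => Sum.elim id v (τ p)

/-- Truncate a history at `t`. -/
def trunc {A : Type} [Inhabited A] (t : ℕ) (h : ℕ → A) : ℕ → A :=
  fun p => if p < t then h p else default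

/-- Prefix Hales–Jewett, per-cutoff version. -/
theorem PHJperc (A : Type) [Fintype A] [DecidableEq A] [Inhabited A] :
    ∀ (M : ℕ) (κ : Type) [Fintype κ], ∃ L : ℕ, ∀ ε : ℕ → (ℕ → A) → κ,
      ∃ (τ : ℕ → A ⊕ Fin M) (first : Fin M → ℕ) (e : Fin M → κ),
        (∀ j, τ (first j) = Sum.inr j) ∧
        (∀ j p, τ p = Sum.inr j → first j ≤ p) ∧
        (∀ (j j' : Fin M) (p q : ℕ), j < j' → τ p = Sum.inr j → τ q = Sum.inr j' → p < q) ∧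
        (∀ j p, τ p = Sum.inr j → p < L) ∧
        (∀ (j : Fin M) (v : Fin M → A), ε (first j) (trunc (first j) (fill τ v)) = e j) := by
  intro M
  induction M with
  | zero =>
    intro κ _
    exact ⟨0, fun ε => ⟨fun _ => Sum.inl default, Fin.elim0, Fin.elim0,
      fun j => j.elim0, fun j => j.elim0, fun j => j.elim0, fun j => j.elim0, fun j => j.elim0⟩⟩
  | succ M IH =>
    intro κ _
    obtain ⟨H, hHJ⟩ := exists_hj A (Fin M → κ)
    obtain ⟨L₂, hIH⟩ := IH ((Fin H → A) → κ)
    refine ⟨H + L₂, fun ε => ?_⟩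
    set εhat : ℕ → (ℕ → A) → ((Fin H → A) → κ) :=
      fun t h z => ε (H + t) (fun p => if hp : p < H then z ⟨p, hp⟩ else h (p - H)) with hεhat
    obtain ⟨τh, firsth, eh, hmemh, hminh, hordh, hbdh, hevalh⟩ := hIH εhat
    set γ : (Fin H → A) → (Fin M → κ) := fun z j => eh j z with hγ
    obtain ⟨S₀, f₀, e₀, hS₀ne, hline⟩ := hHJ γ
    set p₀ : Fin H := S₀.min' hS₀ne with hp₀
    set τ : ℕ → A ⊕ Fin (M + 1) := fun p =>
      if hp : p < H then (if (⟨p, hp⟩ : Fin H) ∈ S₀ then Sum.inr 0 else Sum.inl (f₀ ⟨p, hp⟩))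
      else Sum.map id Fin.succ (τh (p - H)) with hτ
    set first : Fin (M + 1) → ℕ := Fin.cases (p₀ : ℕ) (fun j => H + firsth j) with hfirst
    -- analysis of membership in τ
    have hτinr : ∀ (p : ℕ) (j : Fin (M + 1)), τ p = Sum.inr j →
        (j = 0 ∧ ∃ hp : p < H, (⟨p, hp⟩ : Fin H) ∈ S₀) ∨
        (H ≤ p ∧ ∃ jh : Fin M, j = jh.succ ∧ τh (p - H) = Sum.inr jh) := by
      intro p j hj
      by_cases hp : p < H
      · left
        simp only [hτ, dif_pos hp] at hj
        by_cases hmem : (⟨p, hp⟩ : Fin H) ∈ S₀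
        · rw [if_pos hmem] at hj
          exact ⟨by exact (Sum.inr.injEq _ _ ▸ hj.symm).symm ▸ rfl, hp, hmem⟩
        · rw [if_neg hmem] at hj; exact absurd hj (by simp)
      · right
        simp only [hτ, dif_neg hp] at hj
        rcases h : τh (p - H) with a | jh
        · rw [h] at hj; exact absurd hj (by simp)
        · rw [h] at hj
          simp only [Sum.map_inr] at hj
          exact ⟨Nat.le_of_not_lt hp, jh, by injection hj with h'; exact h'.symm, rfl⟩
    have hfirstzero : first 0 = (p₀ : ℕ) := rfl
    have hfirstsucc : ∀ j : Fin M, first j.succ = H + firsth j := fun j => by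
      simp [hfirst]
    set E : Fin (M + 1) → κ :=
      Fin.cases (ε (p₀ : ℕ) (trunc (p₀ : ℕ) (fill τ (fun _ => default)))) e₀ with hE
    have hE0 : E 0 = ε (p₀ : ℕ) (trunc (p₀ : ℕ) (fill τ (fun _ => default))) := by simp [hE]
    have hEs : ∀ j : Fin M, E j.succ = e₀ j := fun j => by simp [hE]
    refine ⟨τ, first, E, ?_, ?_, ?_, ?_, ?_⟩
    · -- membership
      intro j
      induction j using Fin.cases with
      | zero =>
        have hp : (p₀ : ℕ) < H := p₀.is_lt
        simp only [hfirstzero, hτ, dif_pos hp]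
        rw [if_pos (by simpa using S₀.min'_mem hS₀ne)]
      | succ j =>
        rw [hfirstsucc]
        have : ¬ (H + firsth j < H) := by omega
        simp only [hτ, dif_neg this]
        rw [show H + firsth j - H = firsth j by omega, hmemh j]
        rfl
    · -- minimality
      intro j p hp
      rcases hτinr p j hp with ⟨rfl, hpH, hmem⟩ | ⟨hHp, jh, rfl, hth⟩
      · rw [hfirstzero]
        exact_mod_cast Fin.mk_le_mk.mp (S₀.min'_le _ hmem)
      · rw [hfirstsucc]
        have := hminh jh _ hth
        omega
    · -- order
      intro j j' p q hjj' hp hq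
      rcases hτinr p j hp with ⟨rfl, hpH, hmem⟩ | ⟨hHp, jh, rfl, hth⟩
      · rcases hτinr q j' hq with ⟨rfl, _, _⟩ | ⟨hHq, jh', rfl, hth'⟩
        · exact absurd hjj' (lt_irrefl _)
        · omega
      · rcases hτinr q j' hq with ⟨rfl, _, _⟩ | ⟨hHq, jh', rfl, hth'⟩
        · exact absurd hjj' (Fin.not_lt_zero _)
        · have : jh < jh' := Fin.succ_lt_succ_iff.mp hjj'
          have := hordh jh jh' _ _ this hth hth'
          omega
    · -- bound
      intro j p hp
      rcases hτinr p j hp with ⟨rfl, hpH, hmem⟩ | ⟨hHp, jh, rfl, hth⟩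
      · omega
      · have := hbdh jh _ hth
        omega
    · -- evaluation
      intro j v
      induction j using Fin.cases with
      | zero =>
        rw [hfirstzero, hE0]
        congr 1
        funext p
        simp only [trunc]
        by_cases hpt : p < (p₀ : ℕ)
        · rw [if_pos hpt, if_pos hpt]
          have hpH : p < H := lt_trans hpt p₀.is_lt
          have hnotmem : (⟨p, hpH⟩ : Fin H) ∉ S₀ := by
            intro hmem
            have h1 : p₀ ≤ ⟨p, hpH⟩ := S₀.min'_le _ hmem
            have h2 : (p₀ : ℕ) ≤ p := h1
            omega
          simp only [fill, hτ, dif_pos hpH, if_neg hnotmem]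
          rfl
        · rw [if_neg hpt, if_neg hpt]
      | succ j =>
        rw [hfirstsucc j, hEs j]
        have key : trunc (H + firsth j) (fill τ v) =
            (fun p => if hp : p < H then
                (if (⟨p, hp⟩ : Fin H) ∈ S₀ then v 0 else f₀ ⟨p, hp⟩)
              else (trunc (firsth j) (fill τh (fun i => v i.succ))) (p - H)) := by
          funext p
          by_cases hpH : p < H
          · have : p < H + firsth j := by omega
            simp only [trunc, if_pos this, dif_pos hpH, fill, hτ]
            by_cases hmem : (⟨p, hpH⟩ : Fin H) ∈ S₀
            · rw [if_pos hmem, if_pos hmem]; rfl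
            · rw [if_neg hmem, if_neg hmem]; rfl
          · simp only [trunc, dif_neg hpH, fill]
            have h1 : p < H + firsth j ↔ p - H < firsth j := by omega
            by_cases h2 : p < H + firsth j
            · rw [if_pos h2, if_pos (h1.mp h2)]
              simp only [hτ, dif_neg hpH]
              rcases h : τh (p - H) with a | jh <;> simp [h]
            · rw [if_neg h2, if_neg (fun hh => h2 (h1.mpr hh))]
        rw [key]
        have := hevalh j (fun i => v i.succ)
        rw [hεhat] at this
        have heq : ε (H + firsth j)
            (fun p => if hp : p < H then (fun q : Fin H => if q ∈ S₀ then v 0 else f₀ q) ⟨p, hp⟩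
              else (trunc (firsth j) (fill τh (fun i => v i.succ))) (p - H)) =
            eh j (fun q : Fin H => if q ∈ S₀ then v 0 else f₀ q) := this ▸ rfl
        calc ε (H + firsth j) (fun p => if hp : p < H then
                (if (⟨p, hp⟩ : Fin H) ∈ S₀ then v 0 else f₀ ⟨p, hp⟩)
              else (trunc (firsth j) (fill τh (fun i => v i.succ))) (p - H))
            = eh j (fun q : Fin H => if q ∈ S₀ then v 0 else f₀ q) := heq
          _ = γ (fun q : Fin H => if q ∈ S₀ then v 0 else f₀ q) j := rfl
          _ = e₀ j := by rw [hline (v 0)]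



/-- Prefix Hales–Jewett, fully monochromatic version. -/
theorem PHJfull (A : Type) [Fintype A] [DecidableEq A] [Inhabited A] (m : ℕ)
    (κ : Type) [Fintype κ] [Nonempty κ] :
    ∃ L : ℕ, ∀ ε : ℕ → (ℕ → A) → κ,
      ∃ (τ : ℕ → A ⊕ Fin m) (first : Fin m → ℕ) (estar : κ),
        (∀ j, τ (first j) = Sum.inr j) ∧
        (∀ j p, τ p = Sum.inr j → first j ≤ p) ∧
        (∀ (j j' : Fin m) (p q : ℕ), j < j' → τ p = Sum.inr j → τ q = Sum.inr j' → p < q) ∧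
        (∀ j p, τ p = Sum.inr j → p < L) ∧
        (∀ (j : Fin m) (v : Fin m → A), ε (first j) (trunc (first j) (fill τ v)) = estar) := by
  classical
  set M : ℕ := Fintype.card κ * m + 1 with hM
  obtain ⟨L, hperc⟩ := PHJperc A M κ
  refine ⟨L, fun ε => ?_⟩
  obtain ⟨τ, first, e, hmem, hmin, hord, hbd, heval⟩ := hperc ε
  have hcard : (Finset.univ : Finset κ).card * m < (Finset.univ : Finset (Fin M)).card := by
    simp [hM]
  obtain ⟨y, -, hy⟩ := Finset.exists_lt_card_fiber_of_mul_lt_card_of_maps_to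
    (f := e) (fun a _ => Finset.mem_univ (e a)) hcard
  obtain ⟨T, hTsub, hTcard⟩ := Finset.exists_subset_card_eq (le_of_lt hy)
  set σ : Fin m ≃o T := T.orderIsoOfFin hTcard with hσ
  have hey : ∀ i : Fin m, e ((σ i : Fin M)) = y := by
    intro i
    have := hTsub (σ i).2
    simp only [Finset.mem_filter] at this
    exact this.2
  have hmono : ∀ i i' : Fin m, i < i' → ((σ i : Fin M)) < ((σ i' : Fin M)) := by
    intro i i' h
    exact_mod_cast σ.strictMono h
  have hinj : Function.Injective (fun i : Fin m => (σ i : Fin M)) := by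
    intro i i' h
    exact σ.injective (Subtype.ext h)
  set τ' : ℕ → A ⊕ Fin m := fun p => Sum.elim Sum.inl
    (fun J => if h : ∃ i : Fin m, (σ i : Fin M) = J then Sum.inr h.choose else Sum.inl default)
    (τ p) with hτ'
  have hiff : ∀ (p : ℕ) (i : Fin m), τ' p = Sum.inr i ↔ τ p = Sum.inr (σ i : Fin M) := by
    intro p i
    constructor
    · intro h
      rcases hJ : τ p with a | J
      · simp only [hτ', hJ, Sum.elim_inl] at h; exact absurd h (by simp)
      · simp only [hτ', hJ, Sum.elim_inr] at h
        by_cases hex : ∃ i : Fin m, (σ i : Fin M) = J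
        · rw [dif_pos hex] at h
          have h1 : hex.choose = i := by injection h
          rw [← h1, hex.choose_spec]
        · rw [dif_neg hex] at h; exact absurd h (by simp)
    · intro h
      have hex : ∃ i' : Fin m, (σ i' : Fin M) = (σ i : Fin M) := ⟨i, rfl⟩
      simp only [hτ', h, Sum.elim_inr, dif_pos hex]
      congr 1
      exact hinj hex.choose_spec
  refine ⟨τ', fun i => first (σ i : Fin M), y, ?_, ?_, ?_, ?_, ?_⟩
  · intro i; exact (hiff _ _).mpr (hmem _)
  · intro i p hp; exact hmin _ _ ((hiff _ _).mp hp)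
  · intro i i' p q h hp hq
    exact hord _ _ _ _ (hmono _ _ h) ((hiff _ _).mp hp) ((hiff _ _).mp hq)
  · intro i p hp; exact hbd _ _ ((hiff _ _).mp hp)
  · intro i v
    set vt : Fin M → A := fun J =>
      if h : ∃ i' : Fin m, (σ i' : Fin M) = J then v h.choose else default with hvt
    have hfill : fill τ' v = fill τ vt := by
      funext p
      rcases hJ : τ p with a | J
      · simp [fill, hτ', hJ]
      · simp only [fill, hτ', hJ, Sum.elim_inr, hvt]
        by_cases hex : ∃ i' : Fin m, (σ i' : Fin M) = J
        · rw [dif_pos hex, dif_pos hex]; rfl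
        · rw [dif_neg hex, dif_neg hex]; rfl
    rw [hfill]
    have h1 := heval (σ i : Fin M) vt
    rw [h1, hey]



/-! ### The Graham–Rothschild theorem -/

/-- The Graham–Rothschild statement, for `k`-parameter subwords over alphabet `A`. -/
def GRStmt (k : ℕ) (A : Type) : Prop :=
  ∀ (m : ℕ) (κ : Type), Fintype κ → Nonempty κ →
    ∃ n : ℕ, ∀ c : (Fin n → A ⊕ Fin k) → κ,
      ∃ W : Fin n → A ⊕ Fin m, Legal W ∧
        ∃ e : κ, ∀ u : Fin m → A ⊕ Fin k, Legal u → c (comp W u) = e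

theorem GRzero (A : Type) [Fintype A] [DecidableEq A] [Inhabited A] : GRStmt 0 A := by
  intro m κ hκfin hκne
  obtain ⟨L, hP⟩ := PHJperc A (m + 1) κ
  refine ⟨L, fun c => ?_⟩
  set ε : ℕ → (ℕ → A) → κ :=
    fun t h => c (fun p : Fin L => if (p : ℕ) < t then Sum.inl (h p) else Sum.inl default) with hε
  obtain ⟨τ, first, e, hmem, hmin, hord, hbd, heval⟩ := hP ε
  set F : ℕ := first ⟨m, Nat.lt_succ_self m⟩ with hF
  set W : Fin L → A ⊕ Fin m := fun p =>
    if (p : ℕ) < F then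
      Sum.elim Sum.inl
        (fun j : Fin (m + 1) =>
          if hj : (j : ℕ) < m then Sum.inr (⟨(j : ℕ), hj⟩ : Fin m) else Sum.inl default)
        (τ (p : ℕ))
    else Sum.inl default with hWdef
  have hτF : τ F = Sum.inr ⟨m, Nat.lt_succ_self m⟩ := hmem _
  have hWinr : ∀ (p : Fin L) (i : Fin m),
      W p = Sum.inr i ↔ ((p : ℕ) < F ∧ τ (p : ℕ) = Sum.inr (Fin.castSucc i)) := by
    intro p i
    constructor
    · intro h
      by_cases hpF : (p : ℕ) < F
      · rcases hJ : τ (p : ℕ) with a | J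
        · simp only [hWdef, if_pos hpF, hJ, Sum.elim_inl] at h
          exact absurd h (by simp)
        · simp only [hWdef, if_pos hpF, hJ, Sum.elim_inr] at h
          by_cases hj : (J : ℕ) < m
          · rw [dif_pos hj] at h
            have h2 : (⟨(J : ℕ), hj⟩ : Fin m) = i := by injection h
            have h3 : (J : ℕ) = (i : ℕ) := by rw [← h2]
            refine ⟨hpF, ?_⟩
            congr 1
            apply Fin.ext
            simpa using h3

          · rw [dif_neg hj] at h
            exact absurd h (by simp)
      · simp only [hWdef, if_neg hpF] at h
        exact absurd h (by simp)
    · rintro ⟨hpF, hJ⟩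
      have hj : ((Fin.castSucc i : Fin (m + 1)) : ℕ) < m := by
        simpa using i.is_lt
      have h4 : W p = Sum.inr (⟨((Fin.castSucc i : Fin (m + 1)) : ℕ), hj⟩ : Fin m) := by
        simp only [hWdef, if_pos hpF, hJ, Sum.elim_inr, dif_pos hj]
      rw [h4]
      exact congrArg Sum.inr (Fin.ext (by simp))
  have hfirstlt : ∀ i : Fin m, first (Fin.castSucc i) < F := by
    intro i
    refine hord (Fin.castSucc i) ⟨m, Nat.lt_succ_self m⟩ _ _ ?_ (hmem _) hτF
    simp [Fin.lt_def]
  refine ⟨W, ⟨?_, ?_⟩, e ⟨m, Nat.lt_succ_self m⟩, fun u _ => ?_⟩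
  · intro i
    have hbd' : first (Fin.castSucc i) < L := hbd _ _ (hmem _)
    refine ⟨⟨first (Fin.castSucc i), hbd'⟩, ?_⟩
    rw [hWinr]
    exact ⟨hfirstlt i, hmem _⟩
  · intro p i i' hpi hle
    have h1 := (hWinr p i).mp hpi
    have hq : first (Fin.castSucc i') ≤ (p : ℕ) := by
      rcases lt_or_eq_of_le hle with hlt | rfl
      · exact le_of_lt (hord (Fin.castSucc i') (Fin.castSucc i) _ _
          (Fin.castSucc_lt_castSucc_iff.mpr hlt) (hmem _) h1.2)
      · exact hmin _ _ h1.2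
    have hbd' : first (Fin.castSucc i') < L := hbd _ _ (hmem _)
    refine ⟨⟨first (Fin.castSucc i'), hbd'⟩, ?_, ?_⟩
    · exact hq
    · rw [hWinr]
      exact ⟨hfirstlt i', hmem _⟩
  · -- monochromaticity
    set va : Fin m → A := fun i => Sum.elim id Fin.elim0 (u i) with hva
    have hu : ∀ i, u i = Sum.inl (va i) := by
      intro i
      rcases h : u i with a | j
      · simp [hva, h]
      · exact j.elim0
    set vhat : Fin (m + 1) → A :=
      fun J => if hJ : (J : ℕ) < m then va ⟨(J : ℕ), hJ⟩ else default with hvhat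
    have hcompW : comp W u =
        fun p : Fin L => if (p : ℕ) < F then Sum.inl (fill τ vhat (p : ℕ))
          else Sum.inl default := by
      funext p
      show Sum.elim Sum.inl u (W p) = _
      by_cases hpF : (p : ℕ) < F
      · rcases hJ : τ (p : ℕ) with a | J
        · have hWp : W p = Sum.inl a := by
            simp only [hWdef, if_pos hpF, hJ, Sum.elim_inl]
          rw [hWp, if_pos hpF]
          simp [fill, hJ]
        · by_cases hj : (J : ℕ) < m
          · have hWp : W p = Sum.inr (⟨(J : ℕ), hj⟩ : Fin m) := by
              simp only [hWdef, if_pos hpF, hJ, Sum.elim_inr, dif_pos hj]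
            rw [hWp, if_pos hpF]
            simp only [Sum.elim_inr, hu ⟨(J : ℕ), hj⟩, fill, hJ, hvhat]
            rw [dif_pos hj]
          · exfalso
            have hJm : J = ⟨m, Nat.lt_succ_self m⟩ := Fin.ext (by show (J : ℕ) = m; have := J.is_lt; omega)
            rw [hJm] at hJ
            have := hmin _ _ hJ
            omega
      · have hWp : W p = Sum.inl default := by
          simp only [hWdef, if_neg hpF]
        rw [hWp, if_neg hpF]
        simp
    have h1 : c (comp W u) = ε F (fill τ vhat) := by
      rw [hcompW, hε]
    have harg : (fun p : Fin L => if (p : ℕ) < F then (Sum.inl (fill τ vhat (p : ℕ)) : A ⊕ Fin 0)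
          else Sum.inl (default : A)) =
        (fun p : Fin L => if (p : ℕ) < F then (Sum.inl (trunc F (fill τ vhat) (p : ℕ)) : A ⊕ Fin 0)
          else Sum.inl (default : A)) := by
      funext p
      by_cases hpF : (p : ℕ) < F
      · rw [if_pos hpF, if_pos hpF]
        congr 1
        rw [trunc, if_pos hpF]
      · rw [if_neg hpF, if_neg hpF]
    have h2 : ε F (fill τ vhat) = ε F (trunc F (fill τ vhat)) := by
      rw [hε]
      exact congrArg c harg
    rw [h1, h2]
    exact heval _ _

/-! ### The inductive step machinery -/

/-- Convert a word over `Option A` with `P` parameters into a word over `A` with `P + 1`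
parameters, sending the letter `none` to the new first parameter. -/
def convP {A : Type} {P : ℕ} : (Option A ⊕ Fin P) → (A ⊕ Fin (P + 1)) :=
  Sum.elim (fun o => o.elim (Sum.inr 0) Sum.inl) (fun j => Sum.inr j.succ)

def unconv {A : Type} {k : ℕ} : (A ⊕ Fin (k + 1)) → (Option A ⊕ Fin k) :=
  Sum.elim (fun a => Sum.inl (some a))
    (fun j => Fin.cases (Sum.inl none) (fun j' => Sum.inr j') j)

@[simp] lemma convP_inl_some {A : Type} {P : ℕ} (a : A) :
    (convP (Sum.inl (some a)) : A ⊕ Fin (P + 1)) = Sum.inl a := rfl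

@[simp] lemma convP_inl_none {A : Type} {P : ℕ} :
    (convP (Sum.inl (none : Option A)) : A ⊕ Fin (P + 1)) = Sum.inr 0 := rfl

@[simp] lemma convP_inr {A : Type} {P : ℕ} (j : Fin P) :
    (convP (Sum.inr j) : A ⊕ Fin (P + 1)) = Sum.inr j.succ := rfl

@[simp] lemma unconv_inl {A : Type} {k : ℕ} (a : A) :
    (unconv (Sum.inl a) : Option A ⊕ Fin k) = Sum.inl (some a) := rfl

@[simp] lemma unconv_inr_zero {A : Type} {k : ℕ} :
    (unconv (Sum.inr 0) : Option A ⊕ Fin k) = Sum.inl none := by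
  simp [unconv]

@[simp] lemma unconv_inr_succ {A : Type} {k : ℕ} (j : Fin k) :
    (unconv (Sum.inr j.succ) : Option A ⊕ Fin k) = Sum.inr j := by
  simp [unconv]

lemma convP_unconv {A : Type} {k : ℕ} (x : A ⊕ Fin (k + 1)) : convP (unconv x) = x := by
  rcases x with a | j
  · rfl
  · induction j using Fin.cases with
    | zero => simp
    | succ j => simp

/-- Phase 1: homogenize over all subwords whose first slot carries the first parameter. -/
theorem L1 {k : ℕ} {A : Type} [Fintype A] [DecidableEq A] [Inhabited A]
    (IH : GRStmt k (Option A)) (M : ℕ) (κ : Type) [Fintype κ] [Nonempty κ] :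
    ∃ n : ℕ, ∀ c : (Fin n → A ⊕ Fin (k + 1)) → κ,
      ∃ V : Fin n → A ⊕ Fin (M + 1), Legal V ∧
        ∃ e : κ, ∀ v : Fin (M + 1) → A ⊕ Fin (k + 1),
          Legal v → v 0 = Sum.inr 0 → c (comp V v) = e := by
  obtain ⟨n', hn'⟩ := IH M κ inferInstance inferInstance
  refine ⟨n' + 1, fun c => ?_⟩
  set c₁ : (Fin n' → Option A ⊕ Fin k) → κ :=
    fun g => c (Fin.cons (Sum.inr 0) (fun p => convP (g p))) with hc₁
  obtain ⟨W, hWleg, e, hmono⟩ := hn' c₁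
  set V : Fin (n' + 1) → A ⊕ Fin (M + 1) :=
    Fin.cons (Sum.inr 0) (fun p => convP (W p)) with hV
  have hV0 : V 0 = Sum.inr 0 := rfl
  have hVsucc : ∀ p : Fin n', V p.succ = convP (W p) := fun p => by
    simp [hV]
  refine ⟨V, ⟨?_, ?_⟩, e, ?_⟩
  · -- occurrence
    intro j
    induction j using Fin.cases with
    | zero => exact ⟨0, hV0⟩
    | succ j =>
      obtain ⟨p, hp⟩ := hWleg.1 j
      exact ⟨p.succ, by rw [hVsucc, hp, convP_inr]⟩
  · -- order
    intro p j j' hpj hle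
    rcases Fin.eq_zero_or_eq_succ p with rfl | ⟨p', rfl⟩
    · rw [hV0] at hpj
      have : j = 0 := by injection hpj with h; exact h.symm
      subst this
      have : j' = 0 := Fin.le_zero_iff.mp hle
      subst this
      exact ⟨0, le_refl _, hV0⟩
    · rw [hVsucc] at hpj
      rcases hw : W p' with o | i
      · rcases o with _ | a
        · rw [hw, convP_inl_none] at hpj
          have : j = 0 := by injection hpj with h; exact h.symm
          subst this
          have : j' = 0 := Fin.le_zero_iff.mp hle
          subst this
          exact ⟨0, Fin.zero_le _, hV0⟩
        · rw [hw, convP_inl_some] at hpj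
          exact absurd hpj (by simp)
      · rw [hw, convP_inr] at hpj
        have hj : j = i.succ := by injection hpj with h; exact h.symm
        subst hj
        induction j' using Fin.cases with
        | zero => exact ⟨0, Fin.zero_le _, hV0⟩
        | succ j'' =>
          have hle' : j'' ≤ i := by
            rwa [Fin.succ_le_succ_iff] at hle
          obtain ⟨q, hqle, hq⟩ := hWleg.2 p' i j'' hw hle'
          exact ⟨q.succ, Fin.succ_le_succ_iff.mpr hqle, by rw [hVsucc, hq, convP_inr]⟩
  · -- monochromaticity
    intro v hvleg hv0
    set u : Fin M → Option A ⊕ Fin k := fun i => unconv (v i.succ) with hu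
    have huinv : ∀ (i : Fin M) (j : Fin k), u i = Sum.inr j → v i.succ = Sum.inr j.succ := by
      intro i j h
      rcases hx : v i.succ with a | J
      · rw [hu] at h; simp only [hx, unconv_inl] at h
        exact absurd h (by simp)
      · rw [hu] at h; simp only [hx] at h
        induction J using Fin.cases with
        | zero => rw [unconv_inr_zero] at h; exact absurd h (by simp)
        | succ J' =>
          rw [unconv_inr_succ] at h
          have : J' = j := by injection h
          rw [this]
    have huleg : Legal u := by
      constructor
      · intro j
        obtain ⟨p, hp⟩ := hvleg.1 j.succ
        rcases Fin.eq_zero_or_eq_succ p with rfl | ⟨p', rfl⟩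
        · rw [hv0] at hp
          have : (0 : Fin (k + 1)) = j.succ := by injection hp
          exact absurd this.symm (Fin.succ_ne_zero j)
        · refine ⟨p', ?_⟩
          show unconv (v p'.succ) = Sum.inr j
          rw [hp, unconv_inr_succ]
      · intro i j j' hij hle
        have hv' := huinv i j hij
        obtain ⟨q, hqle, hq⟩ := hvleg.2 i.succ j.succ j'.succ hv'
          (Fin.succ_le_succ_iff.mpr hle)
        rcases Fin.eq_zero_or_eq_succ q with rfl | ⟨q', rfl⟩
        · rw [hv0] at hq
          have : (0 : Fin (k + 1)) = j'.succ := by injection hq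
          exact absurd this.symm (Fin.succ_ne_zero j')
        · refine ⟨q', ?_, ?_⟩
          · rwa [Fin.succ_le_succ_iff] at hqle
          · show unconv (v q'.succ) = Sum.inr j'
            rw [hq, unconv_inr_succ]
    have hkey : comp V v = Fin.cons (Sum.inr 0) (fun p => convP ((comp W u) p)) := by
      funext p
      rcases Fin.eq_zero_or_eq_succ p with rfl | ⟨q, rfl⟩
      · show Sum.elim Sum.inl v (V 0) = _
        rw [hV0]
        simpa using hv0
      · show Sum.elim Sum.inl v (V q.succ) = _
        rw [hVsucc]
        have : (Fin.cons (Sum.inr 0) (fun p => convP ((comp W u) p)) :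
            Fin (n' + 1) → A ⊕ Fin (k + 1)) q.succ = convP ((comp W u) q) := by
          simp
        rw [this]
        rcases hw : W q with o | i
        · rcases o with _ | a
          · rw [convP_inl_none]
            show v 0 = convP (Sum.elim Sum.inl u (W q))
            rw [hw, hv0]
            rfl
          · show Sum.elim Sum.inl v (convP (Sum.inl (some a))) =
              convP (Sum.elim Sum.inl u (W q))
            rw [hw]
            rfl
        · rw [convP_inr]
          show v i.succ = convP (Sum.elim Sum.inl u (W q))
          rw [hw]
          show v i.succ = convP (unconv (v i.succ))
          exact (convP_unconv (v i.succ)).symm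
    rw [hkey]
    exact hmono u huleg

/-- Iterated phase 1: a word with `L` special slots such that the colour of a legal subword
placing its first parameter on special slot `t` (with letters before) depends only on `t` and
the letters at the earlier special slots. -/
theorem ITER {k : ℕ} {A : Type} [Fintype A] [DecidableEq A] [Inhabited A]
    (IH : GRStmt k (Option A)) :
    ∀ (L : ℕ) (κ : Type) [Fintype κ] [Nonempty κ],
      ∃ (N P : ℕ) (_ : L ≤ P), ∀ c : (Fin N → A ⊕ Fin (k + 1)) → κ,
        ∃ (Y : Fin N → A ⊕ Fin P) (ε : ℕ → (ℕ → A) → κ), Legal Y ∧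
          (∀ (t : ℕ) (h h' : ℕ → A), (∀ i, i < t → h i = h' i) → ε t h = ε t h') ∧
          (∀ (t : ℕ) (ht : t < L) (v : Fin P → A ⊕ Fin (k + 1)) (h : ℕ → A)
            (hP : ∀ i : ℕ, i < L → i < P),
            Legal v → (∀ (i : ℕ) (hi : i < t), v ⟨i, hP i (by omega)⟩ = Sum.inl (h i)) →
            v ⟨t, hP t ht⟩ = Sum.inr 0 → c (comp Y v) = ε t h) := by
  intro L
  induction L with
  | zero =>
    intro κ _ _
    refine ⟨1, 1, Nat.zero_le 1, fun c => ?_⟩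
    refine ⟨fun _ => Sum.inr 0, fun _ _ => c (fun _ => Sum.inr 0), ⟨?_, ?_⟩, ?_, ?_⟩
    · intro j
      exact ⟨0, by rw [Subsingleton.elim j 0]⟩
    · intro p j j' hpj hle
      exact ⟨p, le_refl _, by rw [Subsingleton.elim j' j]; exact hpj⟩
    · intro t h h' _
      rfl
    · intro t ht
      omega
  | succ L ihL =>
    intro κ _ _
    obtain ⟨N₂, P₂, hLP₂, hIH2⟩ := ihL (A → κ)
    obtain ⟨N₁, hL1⟩ := L1 IH N₂ κ
    refine ⟨N₁, P₂ + 1, by omega, fun c => ?_⟩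
    obtain ⟨V, hVleg, e₁, hV⟩ := hL1 c
    set chat : (Fin N₂ → A ⊕ Fin (k + 1)) → (A → κ) :=
      fun g a => c (comp V (Fin.cons (Sum.inl a) g)) with hchat
    obtain ⟨Y₂, ε₂, hY₂leg, hε₂inv, hclass₂⟩ := hIH2 chat
    set w : Fin (N₂ + 1) → A ⊕ Fin (P₂ + 1) :=
      Fin.cons (Sum.inr 0) (fun p => Sum.map id Fin.succ (Y₂ p)) with hw
    have hw0 : w 0 = Sum.inr 0 := rfl
    have hwsucc : ∀ p : Fin N₂, w p.succ = Sum.map id Fin.succ (Y₂ p) := fun p => by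
      simp [hw]
    have hwleg : Legal w := by
      constructor
      · intro j
        induction j using Fin.cases with
        | zero => exact ⟨0, hw0⟩
        | succ j =>
          obtain ⟨p, hp⟩ := hY₂leg.1 j
          exact ⟨p.succ, by rw [hwsucc, hp]; rfl⟩
      · intro p j j' hpj hle
        rcases Fin.eq_zero_or_eq_succ p with rfl | ⟨p', rfl⟩
        · rw [hw0] at hpj
          have : j = 0 := by injection hpj with hh; exact hh.symm
          subst this
          have : j' = 0 := Fin.le_zero_iff.mp hle
          subst this
          exact ⟨0, le_refl _, hw0⟩
        · rw [hwsucc] at hpj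
          rcases hy : Y₂ p' with a | i
          · rw [hy] at hpj
            exact absurd hpj (by simp)
          · rw [hy] at hpj
            simp only [Sum.map_inr] at hpj
            have hj : j = i.succ := by injection hpj with hh; exact hh.symm
            subst hj
            induction j' using Fin.cases with
            | zero => exact ⟨0, Fin.zero_le _, hw0⟩
            | succ j'' =>
              have hle' : j'' ≤ i := by rwa [Fin.succ_le_succ_iff] at hle
              obtain ⟨q, hqle, hq⟩ := hY₂leg.2 p' i j'' hy hle'
              refine ⟨q.succ, Fin.succ_le_succ_iff.mpr hqle, ?_⟩
              rw [hwsucc, hq]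
              rfl
    set Y : Fin N₁ → A ⊕ Fin (P₂ + 1) := comp V w with hY
    set ε : ℕ → (ℕ → A) → κ := fun t h =>
      match t with
      | 0 => e₁
      | (t' + 1) => ε₂ t' (fun i => h (i + 1)) (h 0) with hε
    have hε0 : ∀ h : ℕ → A, ε 0 h = e₁ := fun _ => rfl
    have hεsucc : ∀ (t' : ℕ) (h : ℕ → A), ε (t' + 1) h = ε₂ t' (fun i => h (i + 1)) (h 0) :=
      fun _ _ => rfl
    refine ⟨Y, ε, hVleg.comp hwleg, ?_, ?_⟩
    · -- truncation invariance
      intro t h h' hagree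
      match t with
      | 0 => rfl
      | (t' + 1) =>
        rw [hεsucc, hεsucc]
        calc ε₂ t' (fun i => h (i + 1)) (h 0)
            = ε₂ t' (fun i => h' (i + 1)) (h 0) := by
              exact congrFun (hε₂inv t' _ _ (fun i hi => hagree (i + 1) (by omega))) _
          _ = ε₂ t' (fun i => h' (i + 1)) (h' 0) := by rw [hagree 0 (by omega)]
    · -- classes
      intro t ht v h hP hvleg hlet hx
      rw [hY, comp_assoc]
      match t, ht with
      | 0, ht =>
        rw [hε0 h]
        have h0 : (comp w v) 0 = Sum.inr 0 := by
          show Sum.elim Sum.inl v (w 0) = Sum.inr 0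
          rw [hw0]
          simpa using hx
        exact hV (comp w v) (hwleg.comp hvleg) h0
      | (t' + 1), ht =>
        have ht' : t' < L := by omega
        have hv0 : v 0 = Sum.inl (h 0) := by
          exact hlet 0 (by omega)
        set v' : Fin P₂ → A ⊕ Fin (k + 1) := fun i => v i.succ with hv'
        have hv'leg : Legal v' := hvleg.tail hv0
        have hcompwv : comp w v = Fin.cons (Sum.inl (h 0)) (comp Y₂ v') := by
          funext p
          rcases Fin.eq_zero_or_eq_succ p with rfl | ⟨q, rfl⟩
          · show Sum.elim Sum.inl v (w 0) = _
            rw [hw0]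
            simpa using hv0
          · show Sum.elim Sum.inl v (w q.succ) = _
            rw [hwsucc]
            have hrhs : (Fin.cons (Sum.inl (h 0)) (comp Y₂ v') :
                Fin (N₂ + 1) → A ⊕ Fin (k + 1)) q.succ = comp Y₂ v' q := by
              simp
            rw [hrhs]
            show Sum.elim Sum.inl v (Sum.map id Fin.succ (Y₂ q)) =
              Sum.elim Sum.inl v' (Y₂ q)
            rcases hy : Y₂ q with a | i
            · rfl
            · rfl
        rw [hcompwv]
        have : c (comp V (Fin.cons (Sum.inl (h 0)) (comp Y₂ v'))) =
            chat (comp Y₂ v') (h 0) := rfl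
        rw [this]
        have hP' : ∀ i : ℕ, i < L → i < P₂ := fun i hi => by omega
        have hcl := hclass₂ t' ht' v' (fun i => h (i + 1)) hP' hv'leg ?_ ?_
        · rw [hcl, hεsucc]
        · intro i hi
          exact hlet (i + 1) (by omega)
        · have := hx
          show v' ⟨t', hP' t' ht'⟩ = Sum.inr 0
          have hst : (⟨t', hP' t' ht'⟩ : Fin P₂).succ = ⟨t' + 1, hP (t' + 1) ht⟩ :=
            Fin.ext rfl
          rw [hv']
          show v ((⟨t', hP' t' ht'⟩ : Fin P₂).succ) = Sum.inr 0
          rw [hst]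
          exact hx

/-- **The Graham–Rothschild theorem.** -/
theorem GR : ∀ (k : ℕ) (A : Type) [Fintype A] [DecidableEq A] [Inhabited A], GRStmt k A := by
  intro k
  induction k with
  | zero =>
    intro A _ _ _
    exact GRzero A
  | succ k ihk =>
    intro A _ _ _
    intro m κ hκfin hκne
    have hIH : GRStmt k (Option A) := ihk (Option A)
    obtain ⟨L, hPHJ⟩ := PHJfull A m κ
    obtain ⟨N, P, hLP, hITER⟩ := ITER hIH L κ
    refine ⟨N, fun c => ?_⟩
    obtain ⟨Y, ε, hYleg, hεinv, hclass⟩ := hITER c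
    obtain ⟨τ, first, estar, hmem, hmin, hord, hbd, heval⟩ := hPHJ ε
    classical
    set y : Fin P → A ⊕ Fin m := fun p =>
      if (p : ℕ) < L then τ (p : ℕ) else Sum.inl default with hy
    have hyembed : ∀ (p : Fin P) (j : Fin m), y p = Sum.inr j ↔
        ((p : ℕ) < L ∧ τ (p : ℕ) = Sum.inr j) := by
      intro p j
      constructor
      · intro hp
        by_cases hpL : (p : ℕ) < L
        · rw [hy] at hp
          simp only [if_pos hpL] at hp
          exact ⟨hpL, hp⟩
        · rw [hy] at hp
          simp only [if_neg hpL] at hp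
          exact absurd hp (by simp)
      · rintro ⟨hpL, hτ⟩
        rw [hy]
        simp only [if_pos hpL]
        exact hτ
    have hyleg : Legal y := by
      constructor
      · intro j
        have h1 : first j < L := hbd j _ (hmem j)
        refine ⟨⟨first j, lt_of_lt_of_le h1 hLP⟩, ?_⟩
        rw [hyembed]
        exact ⟨h1, hmem j⟩
      · intro p j j' hpj hle
        obtain ⟨hpL, hτ⟩ := (hyembed p j).mp hpj
        have h1 : first j' < L := hbd j' _ (hmem j')
        have h2 : first j' ≤ (p : ℕ) := by
          rcases lt_or_eq_of_le hle with hlt | rfl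
          · exact le_of_lt (hord j' j _ _ hlt (hmem j') hτ)
          · exact hmin _ _ hτ
        refine ⟨⟨first j', lt_of_lt_of_le h1 hLP⟩, ?_, ?_⟩
        · exact h2
        · rw [hyembed]
          exact ⟨h1, hmem j'⟩
    refine ⟨comp Y y, hYleg.comp hyleg, estar, ?_⟩
    intro vstar hvleg
    rw [comp_assoc]
    set u : Fin P → A ⊕ Fin (k + 1) := comp y vstar with hu
    have huleg : Legal u := hyleg.comp hvleg
    -- the first slot of `vstar` carrying the parameter 0
    set S0 : Finset (Fin m) := Finset.univ.filter (fun i => vstar i = Sum.inr 0) with hS0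
    have hS0ne : S0.Nonempty := by
      obtain ⟨i, hi⟩ := hvleg.1 0
      exact ⟨i, by simp [hS0, hi]⟩
    set i₀ : Fin m := S0.min' hS0ne with hi₀
    have hvi₀ : vstar i₀ = Sum.inr 0 :=
      (Finset.mem_filter.mp (S0.min'_mem hS0ne)).2
    have hmins : ∀ i : Fin m, i < i₀ → ∃ a, vstar i = Sum.inl a := by
      intro i hi
      rcases hvi : vstar i with a | J
      · exact ⟨a, rfl⟩
      · exfalso
        obtain ⟨q, hqle, hq⟩ := hvleg.2 i J 0 hvi (Fin.zero_le J)
        have hqS : q ∈ S0 := by simp [hS0, hq]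
        have := S0.min'_le q hqS
        rw [← hi₀] at this
        exact absurd (lt_of_le_of_lt (le_trans this hqle) hi) (lt_irrefl _)
    set tstar : ℕ := first i₀ with htstar
    have htL : tstar < L := hbd i₀ _ (hmem i₀)
    -- analysis of `u` below `tstar`
    have hanal : ∀ (i : ℕ) (hi : i < tstar),
        ∃ a, u ⟨i, by omega⟩ = Sum.inl a ∧ fill τ (fun j => Sum.elim id
          (fun _ => default) (vstar j)) i = a := by
      intro i hi
      have hiL : i < L := by omega
      have hiP : i < P := by omega
      have hyi : y ⟨i, hiP⟩ = τ i := by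
        rw [hy]
        simp only [if_pos hiL]
      rcases hτi : τ i with b | j
      · refine ⟨b, ?_, ?_⟩
        · show Sum.elim Sum.inl vstar (y ⟨i, hiP⟩) = Sum.inl b
          rw [hyi, hτi]
          rfl
        · rw [fill, hτi]
          rfl
      · have hji : j < i₀ := by
          rcases lt_trichotomy j i₀ with h1 | h1 | h1
          · exact h1
          · exfalso
            rw [h1] at hτi
            have := hmin i₀ i hτi
            omega
          · exfalso
            have := hord i₀ j _ _ h1 (hmem i₀) hτi
            omega
        obtain ⟨a, ha⟩ := hmins j hji
        refine ⟨a, ?_, ?_⟩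
        · show Sum.elim Sum.inl vstar (y ⟨i, hiP⟩) = Sum.inl a
          rw [hyi, hτi]
          simpa using ha
        · rw [fill, hτi]
          simpa using congrArg (Sum.elim id (fun _ => default)) ha
    set h : ℕ → A := fun i =>
      if hiP : i < P then Sum.elim id (fun _ => default) (u ⟨i, hiP⟩) else default with hh
    have hclassapp : c (comp Y u) = ε tstar h := by
      refine hclass tstar htL u h (fun i hi => by omega) huleg ?_ ?_
      · intro i hi
        obtain ⟨a, ha, -⟩ := hanal i hi
        have hiP : i < P := by omega
        rw [hh]
        have : u ⟨i, hiP⟩ = Sum.inl a := ha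
        simp only [dif_pos hiP, this]
        rfl
      · have hyt : y ⟨tstar, by omega⟩ = Sum.inr i₀ := by
          rw [hy]
          simp only [if_pos htL]
          exact hmem i₀
        show Sum.elim Sum.inl vstar (y ⟨tstar, by omega⟩) = Sum.inr 0
        rw [hyt]
        simpa using hvi₀
    rw [hclassapp]
    have hbridge : ε tstar h = ε tstar (trunc tstar (fill τ
        (fun j => Sum.elim id (fun _ => default) (vstar j)))) := by
      refine hεinv tstar _ _ ?_
      intro i hi
      obtain ⟨a, ha, hfa⟩ := hanal i hi
      have hiP : i < P := by omega
      rw [hh]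
      simp only [dif_pos hiP, ha]
      rw [trunc, if_pos hi, hfa]
      rfl
    rw [hbridge]
    exact heval i₀ _

/-! ### Padding: the theorem holds for all large `n` -/

def extend {A : Type} [Inhabited A] {n₀ n k : ℕ} (_ : n₀ ≤ n) (g : Fin n₀ → A ⊕ Fin k) :
    Fin n → A ⊕ Fin k := fun p =>
  if hp : (p : ℕ) < n₀ then g ⟨(p : ℕ), hp⟩ else Sum.inl default

lemma extend_legal {A : Type} [Inhabited A] {n₀ n k : ℕ} (hn : n₀ ≤ n)
    {g : Fin n₀ → A ⊕ Fin k} (hg : Legal g) : Legal (extend hn g) := by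
  constructor
  · intro j
    obtain ⟨p, hp⟩ := hg.1 j
    refine ⟨⟨(p : ℕ), lt_of_lt_of_le p.is_lt hn⟩, ?_⟩
    show (if hq : ((p : ℕ)) < n₀ then g ⟨(p : ℕ), hq⟩ else Sum.inl default) = Sum.inr j
    rw [dif_pos p.is_lt]
    have : (⟨(p : ℕ), p.is_lt⟩ : Fin n₀) = p := Fin.ext rfl
    rw [this]
    exact hp
  · intro p j j' hpj hle
    rcases hplt : (p : ℕ) < n₀ with _
    by_cases hp : (p : ℕ) < n₀
    · have hgp : g ⟨(p : ℕ), hp⟩ = Sum.inr j := by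
        have : extend hn g p = g ⟨(p : ℕ), hp⟩ := dif_pos hp
        rw [← this]
        exact hpj
      obtain ⟨q, hqle, hq⟩ := hg.2 ⟨(p : ℕ), hp⟩ j j' hgp hle
      refine ⟨⟨(q : ℕ), lt_of_lt_of_le q.is_lt hn⟩, ?_, ?_⟩
      · exact hqle
      · show (if hq' : ((q : ℕ)) < n₀ then g ⟨(q : ℕ), hq'⟩ else Sum.inl default) = Sum.inr j'
        rw [dif_pos q.is_lt]
        have : (⟨(q : ℕ), q.is_lt⟩ : Fin n₀) = q := Fin.ext rfl
        rw [this]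
        exact hq
    · exfalso
      have : extend hn g p = Sum.inl default := dif_neg hp
      rw [this] at hpj
      exact absurd hpj (by simp)

lemma extend_comp {A : Type} [Inhabited A] {n₀ n k l : ℕ} (hn : n₀ ≤ n)
    (g : Fin n₀ → A ⊕ Fin k) (u : Fin k → A ⊕ Fin l) :
    comp (extend hn g) u = extend hn (comp g u) := by
  funext p
  show Sum.elim Sum.inl u (extend hn g p) = _
  by_cases hp : (p : ℕ) < n₀
  · rw [show extend hn g p = g ⟨(p : ℕ), hp⟩ from dif_pos hp,
      show extend hn (comp g u) p = comp g u ⟨(p : ℕ), hp⟩ from dif_pos hp]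
    rfl
  · rw [show extend hn g p = Sum.inl default from dif_neg hp,
      show extend hn (comp g u) p = Sum.inl default from dif_neg hp]
    rfl

theorem GR_ge (k m : ℕ) (A : Type) [Fintype A] [DecidableEq A] [Inhabited A]
    (κ : Type) [Fintype κ] [Nonempty κ] :
    ∃ n₀ : ℕ, ∀ n : ℕ, n₀ ≤ n → ∀ c : (Fin n → A ⊕ Fin k) → κ,
      ∃ W : Fin n → A ⊕ Fin m, Legal W ∧
        ∃ e : κ, ∀ u : Fin m → A ⊕ Fin k, Legal u → c (comp W u) = e := by
  obtain ⟨n₀, hn₀⟩ := GR k A m κ inferInstance inferInstance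
  refine ⟨n₀, fun n hn c => ?_⟩
  obtain ⟨W₁, hW₁leg, e, hmono⟩ := hn₀ (fun g => c (extend hn g))
  refine ⟨extend hn W₁, extend_legal hn hW₁leg, e, fun u hu => ?_⟩
  rw [extend_comp hn W₁ u]
  exact hmono u hu

/-! ### Translation to the Milliken–Taylor statement -/

/-- The finite set of positions of parameter `j`, as natural numbers. -/
def toSet {B : Type} [DecidableEq B] {n l : ℕ} (w : Fin n → B ⊕ Fin l) (j : Fin l) :
    Finset ℕ :=
  (Finset.univ.filter (fun p => w p = Sum.inr j)).image (fun p : Fin n => (p : ℕ))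

lemma mem_toSet {B : Type} [DecidableEq B] {n l : ℕ} {w : Fin n → B ⊕ Fin l} {j : Fin l}
    {x : ℕ} : x ∈ toSet w j ↔ ∃ p : Fin n, w p = Sum.inr j ∧ (p : ℕ) = x := by
  simp only [toSet, Finset.mem_image, Finset.mem_filter, Finset.mem_univ, true_and]

lemma toSet_nonempty {B : Type} [DecidableEq B] {n l : ℕ} {w : Fin n → B ⊕ Fin l}
    (hw : Legal w) (j : Fin l) : (toSet w j).Nonempty := by
  obtain ⟨p, hp⟩ := hw.1 j
  exact ⟨(p : ℕ), mem_toSet.mpr ⟨p, hp, rfl⟩⟩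

lemma toSet_disjoint {B : Type} [DecidableEq B] {n l : ℕ} {w : Fin n → B ⊕ Fin l}
    {j j' : Fin l} (hjj' : j ≠ j') : Disjoint (toSet w j) (toSet w j') := by
  rw [Finset.disjoint_left]
  intro x hx hx'
  obtain ⟨p, hp, hpx⟩ := mem_toSet.mp hx
  obtain ⟨q, hq, hqx⟩ := mem_toSet.mp hx'
  have : p = q := Fin.ext (by rw [hpx, hqx])
  rw [this, hq] at hp
  have h5 : j' = j := by injection hp
  exact hjj' h5.symm

lemma toSet_min_lt {B : Type} [DecidableEq B] {n l : ℕ} {w : Fin n → B ⊕ Fin l}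
    (hw : Legal w) {j j' : Fin l} (hjj' : j < j') :
    (toSet w j).min' (toSet_nonempty hw j) < (toSet w j').min' (toSet_nonempty hw j') := by
  obtain ⟨q, hq, hqx⟩ := mem_toSet.mp ((toSet w j').min'_mem (toSet_nonempty hw j'))
  obtain ⟨p, hple, hp⟩ := hw.2 q j' j hq (le_of_lt hjj')
  have hpq : p ≠ q := by
    intro h
    rw [h, hq] at hp
    have : j' = j := by injection hp
    exact absurd this.symm (ne_of_lt hjj')
  have h1 : (toSet w j).min' (toSet_nonempty hw j) ≤ (p : ℕ) :=
    Finset.min'_le _ _ (mem_toSet.mpr ⟨p, hp, rfl⟩)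
  have h2 : (p : ℕ) < (q : ℕ) := lt_of_le_of_ne hple (fun h => hpq (Fin.ext h))
  omega

lemma toSet_comp {B : Type} [DecidableEq B] {n m l : ℕ} (W : Fin n → B ⊕ Fin m)
    (u : Fin m → B ⊕ Fin l) (j : Fin l) :
    toSet (comp W u) j =
      (Finset.univ.filter (fun i => u i = Sum.inr j)).biUnion (fun i => toSet W i) := by
  ext x
  rw [mem_toSet]
  simp only [Finset.mem_biUnion, Finset.mem_filter, Finset.mem_univ, true_and, mem_toSet]
  constructor
  · rintro ⟨p, hp, hpx⟩
    rcases hWp : W p with b | i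
    · exfalso
      have hcp : comp W u p = Sum.inl b := by
        show Sum.elim _ _ (W p) = _
        rw [hWp]
        rfl
      rw [hcp] at hp
      exact absurd hp (by simp)
    · have hcp : comp W u p = u i := by
        show Sum.elim _ _ (W p) = _
        rw [hWp]
        rfl
      rw [hcp] at hp
      exact ⟨i, hp, p, hWp, hpx⟩
  · rintro ⟨i, hui, p, hWp, hpx⟩
    refine ⟨p, ?_, hpx⟩
    show Sum.elim _ _ (W p) = _
    rw [hWp]
    exact hui

/-- `G` belongs to `DS_k(F)` for `F = (F₀,...,F_{m-1})`: the `G j` are pairwise disjoint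
nonempty sets with strictly increasing minima, each a union `⋃_{i ∈ U} F i` for some
nonempty `U ⊆ {0,...,m-1}`. -/
def DSmem (k m : ℕ) (F : Fin m → Finset ℕ) (G : Fin k → Finset ℕ) : Prop :=
  (∀ j : Fin k, ∃ U : Finset (Fin m), U.Nonempty ∧ G j = U.biUnion F) ∧
  (∀ j : Fin k, (G j).Nonempty) ∧
  (∀ j j' : Fin k, j ≠ j' → Disjoint (G j) (G j')) ∧
  (∀ j j' : Fin k, j < j' → (G j).min < (G j').min)

/-- **Finite Milliken–Taylor theorem.** Here `DS_k(n) = DS_k(({i})_{i<n})`. -/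
theorem milliken_taylor (k m r : ℕ) (hk : 0 < k) (hm : 0 < m) (hr : 0 < r) :
    ∃ n₀ : ℕ, 0 < n₀ ∧ ∀ n : ℕ, n₀ ≤ n →
      ∀ c : (Fin k → Finset ℕ) → Fin r,
      ∃ F : Fin m → Finset ℕ,
        DSmem m n (fun i : Fin n => {(i : ℕ)}) F ∧
        ∀ G G' : Fin k → Finset ℕ, DSmem k m F G → DSmem k m F G' → c G = c G' := by
  classical
  haveI : Nonempty (Fin r) := ⟨⟨0, hr⟩⟩
  obtain ⟨n₁, hGR⟩ := GR_ge k m Unit (Fin r)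
  refine ⟨max n₁ 1, lt_of_lt_of_le Nat.one_pos (le_max_right _ _), fun n hn c => ?_⟩
  have hn₁ : n₁ ≤ n := le_trans (le_max_left _ _) hn
  obtain ⟨W, hWleg, e, hmono⟩ := hGR n hn₁ (fun w => c (fun j => toSet w j))
  set F : Fin m → Finset ℕ := fun i => toSet W i with hF
  have hFne : ∀ i, (F i).Nonempty := fun i => toSet_nonempty hWleg i
  have hFmin : ∀ a b : Fin m, a < b → (F a).min' (hFne a) < (F b).min' (hFne b) :=
    fun a b hab => toSet_min_lt hWleg hab
  have hFdisj : ∀ a b : Fin m, a ≠ b → Disjoint (F a) (F b) :=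
    fun a b hab => toSet_disjoint hab
  refine ⟨F, ⟨?_, hFne, hFdisj, ?_⟩, ?_⟩
  · -- each `F i` is a union of singletons
    intro i
    refine ⟨Finset.univ.filter (fun p : Fin n => W p = Sum.inr i), ?_, ?_⟩
    · obtain ⟨p, hp⟩ := hWleg.1 i
      exact ⟨p, by simp [hp]⟩
    · rw [Finset.biUnion_singleton]
      rfl
  · -- minima increasing
    intro i i' hii'
    rw [← Finset.coe_min' (hFne i), ← Finset.coe_min' (hFne i')]
    exact_mod_cast hFmin i i' hii'
  · -- monochromaticity
    intro G G' hG hG'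
    suffices hkey : ∀ G, DSmem k m F G → c G = e by
      rw [hkey G hG, hkey G' hG']
    clear hG hG' G G'
    intro G hG
    choose U hUne hUG using hG.1
    have hGne := hG.2.1
    have hGdisj := hG.2.2.1
    have hGmin := hG.2.2.2
    have hUdisj : ∀ (i : Fin m) (j j' : Fin k), i ∈ U j → i ∈ U j' → j = j' := by
      intro i j j' hij hij'
      by_contra hne
      have hsub1 : F i ⊆ G j := by
        rw [hUG j]
        exact Finset.subset_biUnion_of_mem F hij
      have hsub2 : F i ⊆ G j' := by
        rw [hUG j']
        exact Finset.subset_biUnion_of_mem F hij'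
      obtain ⟨x, hx⟩ := hFne i
      exact (Finset.disjoint_left.mp (hGdisj j j' hne)) (hsub1 hx) (hsub2 hx)
    set u : Fin m → Unit ⊕ Fin k := fun i =>
      if h : ∃ j, i ∈ U j then Sum.inr h.choose else Sum.inl () with hu
    have huiff : ∀ (i : Fin m) (j : Fin k), u i = Sum.inr j ↔ i ∈ U j := by
      intro i j
      constructor
      · intro h
        by_cases hex : ∃ j', i ∈ U j'
        · simp only [hu, dif_pos hex] at h
          have h2 : hex.choose = j := by injection h
          rw [← h2]
          exact hex.choose_spec
        · simp only [hu, dif_neg hex] at h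
          exact absurd h (by simp)
      · intro h
        have hex : ∃ j', i ∈ U j' := ⟨j, h⟩
        simp only [hu, dif_pos hex]
        exact congrArg Sum.inr (hUdisj i _ _ hex.choose_spec h)
    have hGmin' : ∀ j j' : Fin k, j < j' →
        (G j).min' (hGne j) < (G j').min' (hGne j') := by
      intro j j' h
      have h1 := hGmin j j' h
      rw [← Finset.coe_min' (hGne j), ← Finset.coe_min' (hGne j')] at h1
      exact_mod_cast h1
    have huleg : Legal u := by
      constructor
      · intro j
        obtain ⟨i, hi⟩ := hUne j
        exact ⟨i, (huiff i j).mpr hi⟩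
      · intro i j j' hij hle
        rcases lt_or_eq_of_le hle with hlt | rfl
        · have hiU : i ∈ U j := (huiff i j).mp hij
          have hxG : (G j').min' (hGne j') ∈ (U j').biUnion F := by
            rw [← hUG j']
            exact (G j').min'_mem (hGne j')
          obtain ⟨i₀, hi₀U, hi₀F⟩ := Finset.mem_biUnion.mp hxG
          refine ⟨i₀, ?_, (huiff i₀ j').mpr hi₀U⟩
          by_contra hgt
          push_neg at hgt
          have hA : (G j).min' (hGne j) ≤ (F i).min' (hFne i) := by
            apply Finset.min'_le
            rw [hUG j]
            exact Finset.mem_biUnion.mpr ⟨i, hiU, (F i).min'_mem (hFne i)⟩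
          have hB : (F i).min' (hFne i) < (F i₀).min' (hFne i₀) := hFmin i i₀ hgt
          have hC : (F i₀).min' (hFne i₀) ≤ (G j').min' (hGne j') :=
            Finset.min'_le _ _ hi₀F
          have hD := hGmin' j' j hlt
          omega
        · exact ⟨i, le_refl _, hij⟩
    have hGeq : (fun j => toSet (comp W u) j) = G := by
      funext j
      rw [toSet_comp]
      have hfilter : Finset.univ.filter (fun i => u i = Sum.inr j) = U j := by
        ext i
        simp only [Finset.mem_filter, Finset.mem_univ, true_and]
        exact huiff i j
      rw [hfilter, ← hUG j]
    have := hmono u huleg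
    rw [hGeq] at this
    exact this

end DR
end

section
/- For every positive integers m and r there exists a positive integer n₀ such that for every n ≥ n₀ and every r-coloring of the nonempty subsets of {0,...,n-1}, there exist pairwise disjoint nonempty sets F₀,...,F_{m-1} ⊆ {0,...,n-1} with min F₀ < min F₁ < ... < min F_{m-1} such that all nonempty unions ∪_{i∈U} Fᵢ (∅ ≠ U ⊆ {0,...,m-1}) receive the same color. -/
/-!
Hindman's theorem gives a sequence `b` of positive integers all of whose finite sums have the
same colour, where a number is coloured by the colour of its set of binary digits. Grouping the
`b i` into consecutive blocks whose sums are divisible by ever larger powers of two (possible by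
Erdős–Ginzburg–Ziv), the block sums have disjoint, increasing binary supports `F j`; a sum of
block sums is then a finite sum of the `b i`, and its binary support is the union of the `F j`.
The bound `n₀` follows by compactness: being
monochromatic on a fixed finite configuration is an open condition on colourings, and the space
of colourings is compact.
-/
open Finset Function

theorem Hindman.FS_subset_of_forall_get_mem {M : Type*} [AddSemigroup M] {S : AddSubsemigroup M}
    {a : Stream' M} (ha : ∀ i, a.get i ∈ S) : Hindman.FS a ⊆ S := by
  intro x hx
  induction hx with
  | head' a => exact ha 0
  | tail' a m _ ih => exact ih fun i => ha (i + 1)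
  | cons' a m _ ih => exact S.add_mem (ha 0) (ih fun i => ha (i + 1))

theorem Hindman.exists_pos_FS_subset_fiber {κ : Type*} [Finite κ] (c : ℕ → κ) :
    ∃ b : Stream' ℕ, (∀ i, 0 < b.get i) ∧ ∃ k, ∀ x ∈ Hindman.FS b, c x = k := by
  let pos : AddSubsemigroup ℕ := ⟨{x | 0 < x}, fun hx _ => Nat.add_pos_left hx _⟩
  have hcover : Hindman.FS (Stream'.const 1) ⊆ ⋃₀ Set.range fun k => {x | 0 < x ∧ c x = k} :=
    fun x hx => ⟨_, ⟨c x, rfl⟩,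
      FS_subset_of_forall_get_mem (S := pos) (fun _ => Nat.one_pos) hx, rfl⟩
  obtain ⟨_, ⟨k, rfl⟩, b, hb⟩ := FS_partition_regular _ _ (Set.finite_range _) hcover
  exact ⟨b, fun i => (hb (FS.singleton b i)).1, k, fun x hx => (hb hx).2⟩

theorem exists_subset_Ico_nonempty_dvd_sum (A : ℕ → ℕ) (k : ℕ) {d : ℕ} (hd : 0 < d) :
    ∃ s ⊆ Ico k (k + 2 * d), s.Nonempty ∧ d ∣ ∑ i ∈ s, A i := by
  obtain ⟨s, hsub, hcard, hdvd⟩ :=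
    Int.erdos_ginzburg_ziv (fun i => (A i : ℤ)) (s := Ico k (k + 2 * d)) (n := d) (by simp)
  refine ⟨s, hsub, card_pos.1 (hcard ▸ hd), ?_⟩
  exact_mod_cast hdvd

theorem Nat.toFinset_bitIndices_subset_Ico {x L M : ℕ} (hL : 2 ^ L ∣ x) (hM : x < 2 ^ M) :
    x.bitIndices.toFinset ⊆ Ico L M := by
  intro i hi
  rw [List.mem_toFinset] at hi
  refine mem_Ico.2 ⟨?_, ?_⟩
  · obtain ⟨q, rfl⟩ := hL
    rw [Nat.bitIndices_two_pow_mul] at hi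
    obtain ⟨j, -, rfl⟩ := List.mem_map.1 hi
    omega
  · exact (Nat.pow_lt_pow_iff_right (by norm_num)).1
      ((Nat.two_pow_le_of_mem_bitIndices hi).trans_lt hM)

theorem Monotone.lt_of_mem_Ico_of_mem_Ico {f : ℕ → ℕ} (hf : Monotone f) {i j a b : ℕ} (hij : i < j)
    (ha : a ∈ Ico (f i) (f (i + 1))) (hb : b ∈ Ico (f j) (f (j + 1))) : a < b :=
  calc a < f (i + 1) := (mem_Ico.1 ha).2
    _ ≤ f j := hf hij
    _ ≤ b := (mem_Ico.1 hb).1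

theorem pairwise_disjoint_of_forall_lt {T : ℕ → Finset ℕ}
    (h : ∀ i j, i < j → ∀ a ∈ T i, ∀ b ∈ T j, a < b) : Pairwise (Disjoint on T) := by
  intro i j hij
  rcases hij.lt_or_gt with hij | hij
  · exact disjoint_left.2 fun a hai haj => (h i j hij a hai a haj).false
  · exact disjoint_right.2 fun a haj hai => (h j i hij a haj a hai).false

theorem Finset.min_lt_min_of_forall_lt {α : Type*} [LinearOrder α] {s t : Finset α}
    (hs : s.Nonempty) (ht : t.Nonempty) (h : ∀ a ∈ s, ∀ b ∈ t, a < b) : s.min < t.min := by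
  rw [← coe_min' hs, ← coe_min' ht]
  exact WithTop.coe_lt_coe.2 (h _ (min'_mem s hs) _ (min'_mem t ht))

theorem exists_finset_forall_coloring_monochromatic {ι β α κ : Type*} [Finite β] [Finite κ]
    (P : ι → Prop) (T : ι → β → α) (h : ∀ c : α → κ, ∃ i, P i ∧ ∀ u v, c (T i u) = c (T i v)) :
    ∃ s : Finset ι, ∀ c : α → κ, ∃ i ∈ s, P i ∧ ∀ u v, c (T i u) = c (T i v) := by
  let _ : TopologicalSpace κ := ⊥
  have : DiscreteTopology κ := ⟨rfl⟩
  have hopen : ∀ i, IsOpen {c : α → κ | P i ∧ ∀ u v, c (T i u) = c (T i v)} := by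
    intro i
    by_cases hP : P i
    · simp only [hP, true_and, Set.ofPred_forall]
      exact isOpen_iInter_of_finite fun u => isOpen_iInter_of_finite fun v =>
        (isOpen_discrete {p : κ × κ | p.1 = p.2}).preimage
          (f := fun c : α → κ => (c (T i u), c (T i v))) (by fun_prop)
    · simp [hP]
  obtain ⟨s, hs⟩ := isCompact_univ.elim_finite_subcover _ hopen fun c _ => Set.mem_iUnion.2 (h c)
  refine ⟨s, fun c => ?_⟩
  obtain ⟨i, hi, hc⟩ := Set.mem_iUnion₂.1 (hs (Set.mem_univ c))
  exact ⟨i, hi, hc⟩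

namespace FiniteUnions

variable (A : ℕ → ℕ)

noncomputable def block (N : ℕ) : Finset ℕ :=
  (exists_subset_Ico_nonempty_dvd_sum A N (Nat.two_pow_pos N)).choose

theorem block_subset (N : ℕ) : block A N ⊆ Ico N (N + 2 * 2 ^ N) :=
  (exists_subset_Ico_nonempty_dvd_sum A N (Nat.two_pow_pos N)).choose_spec.1

theorem block_nonempty (N : ℕ) : (block A N).Nonempty :=
  (exists_subset_Ico_nonempty_dvd_sum A N (Nat.two_pow_pos N)).choose_spec.2.1

theorem two_pow_dvd_sum_block (N : ℕ) : 2 ^ N ∣ ∑ i ∈ block A N, A i :=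
  (exists_subset_Ico_nonempty_dvd_sum A N (Nat.two_pow_pos N)).choose_spec.2.2

/-- `threshold j` exceeds both the indices used by the first `j` blocks and the binary digits of
their sums, while the digits of the next block sum start at `threshold j`. -/
noncomputable def threshold : ℕ → ℕ
  | 0 => 0
  | j + 1 => threshold j + 2 * 2 ^ threshold j + ∑ i ∈ block A (threshold j), A i

theorem threshold_mono : Monotone (threshold A) :=
  monotone_nat_of_le_succ fun j => by simp only [threshold]; omega

theorem block_threshold_subset (j : ℕ) :
    block A (threshold A j) ⊆ Ico (threshold A j) (threshold A (j + 1)) :=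
  (block_subset A _).trans (Ico_subset_Ico_right (by simp only [threshold]; omega))

theorem bitIndices_sum_block_threshold_subset (j : ℕ) :
    (∑ i ∈ block A (threshold A j), A i).bitIndices.toFinset ⊆
      Ico (threshold A j) (threshold A (j + 1)) := by
  refine Nat.toFinset_bitIndices_subset_Ico (two_pow_dvd_sum_block A _) ?_
  calc _ < 2 ^ ∑ i ∈ block A (threshold A j), A i := Nat.lt_two_pow_self
    _ ≤ 2 ^ threshold A (j + 1) := Nat.pow_le_pow_right two_pos (by simp only [threshold]; omega)

end FiniteUnions

open FiniteUnions in
theorem exists_monochromatic_finite_unions {κ : Type*} [Finite κ] (c : Finset ℕ → κ) :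
    ∃ F : ℕ → Finset ℕ, (∀ i, (F i).Nonempty) ∧ (∀ i j, i < j → ∀ a ∈ F i, ∀ b ∈ F j, a < b) ∧
      ∃ k, ∀ V : Finset ℕ, V.Nonempty → c (V.biUnion F) = k := by
  obtain ⟨b, hb_pos, k, hb⟩ :=
    Hindman.exists_pos_FS_subset_fiber fun x => c (Finset.equivBitIndices x)
  set A := b.get
  set S := fun j => block A (threshold A j)
  set X := fun j => ∑ i ∈ S j, A i
  set F := fun j => (X j).bitIndices.toFinset
  have hF_ordered : ∀ i j, i < j → ∀ a ∈ F i, ∀ b ∈ F j, a < b := fun i j hij x hx y hy =>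
    (threshold_mono A).lt_of_mem_Ico_of_mem_Ico hij
      (bitIndices_sum_block_threshold_subset A i hx) (bitIndices_sum_block_threshold_subset A j hy)
  have hS_ordered : ∀ i j, i < j → ∀ a ∈ S i, ∀ b ∈ S j, a < b := fun i j hij x hx y hy =>
    (threshold_mono A).lt_of_mem_Ico_of_mem_Ico hij
      (block_threshold_subset A i hx) (block_threshold_subset A j hy)
  refine ⟨F, fun j => ?_, hF_ordered, k, fun V hV => ?_⟩
  · have hX : X j ≠ 0 := (sum_pos (fun i _ => hb_pos i) (block_nonempty A _)).ne'
    refine nonempty_iff_ne_empty.2 fun hF => hX ?_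
    rw [← Finset.sum_toFinset_bitIndices_two_pow (X j), show (X j).bitIndices.toFinset = ∅ from hF,
      sum_empty]
  · have hunion : ∑ i ∈ V.biUnion F, 2 ^ i = ∑ i ∈ V.biUnion S, A i := by
      rw [sum_biUnion ((pairwise_disjoint_of_forall_lt hF_ordered).set_pairwise _),
        sum_biUnion ((pairwise_disjoint_of_forall_lt hS_ordered).set_pairwise _)]
      exact sum_congr rfl fun j _ => Finset.sum_toFinset_bitIndices_two_pow (X j)
    have := hb _ (Hindman.FS.finsetSum b (V.biUnion S) (hV.biUnion fun j _ => block_nonempty A _))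
    rwa [← hunion, Finset.equivBitIndices_apply, Finset.toFinset_bitIndices_sum_two_pow] at this

theorem exists_fin_monochromatic_finite_unions {κ : Type*} [Finite κ] (m : ℕ)
    (c : Finset ℕ → κ) :
    ∃ F : Fin m → Finset ℕ,
      ((∀ i, (F i).Nonempty) ∧ (∀ i j, i ≠ j → Disjoint (F i) (F j)) ∧
        ∀ i j : Fin m, i < j → (F i).min < (F j).min) ∧
      ∀ U U' : {U : Finset (Fin m) // U.Nonempty}, c (U.1.biUnion F) = c (U'.1.biUnion F) := by
  obtain ⟨F, hne, hlt, k, hk⟩ := exists_monochromatic_finite_unions c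
  have hcolor (U : {U : Finset (Fin m) // U.Nonempty}) :
      c (U.1.biUnion fun i : Fin m => F i) = k := by
    simpa only [image_biUnion] using hk _ (U.2.image Fin.val)
  refine ⟨fun i => F i, ⟨fun i => hne i, fun i j hij => ?_, fun i j hij => ?_⟩,
    fun U U' => (hcolor U).trans (hcolor U').symm⟩
  · exact pairwise_disjoint_of_forall_lt hlt (Fin.val_injective.ne hij)
  · exact min_lt_min_of_forall_lt (hne i) (hne j) (hlt i j hij)

theorem folkman_general (m r : ℕ) :
    ∃ n₀ : ℕ, 0 < n₀ ∧ ∀ n : ℕ, n₀ ≤ n →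
      ∀ c : Finset ℕ → Fin r,
      ∃ F : Fin m → Finset ℕ,
        (∀ i, (F i).Nonempty) ∧
        (∀ i, F i ⊆ Finset.range n) ∧
        (∀ i j, i ≠ j → Disjoint (F i) (F j)) ∧
        (∀ i j : Fin m, i < j → (F i).min < (F j).min) ∧
        ∀ U U' : Finset (Fin m), U.Nonempty → U'.Nonempty →
          c (U.biUnion F) = c (U'.biUnion F) := by
  obtain ⟨s, hs⟩ := exists_finset_forall_coloring_monochromatic _
    (fun F (U : {U : Finset (Fin m) // U.Nonempty}) => U.1.biUnion F)
    (exists_fin_monochromatic_finite_unions (κ := Fin r) m)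
  set N := (s.biUnion fun F => univ.biUnion F).sup id + 1
  refine ⟨N, Nat.succ_pos _, fun n hn c => ?_⟩
  obtain ⟨F, hFs, ⟨hne, hdisj, hmin⟩, hmono⟩ := hs c
  refine ⟨F, hne, fun i => ?_, hdisj, hmin, fun U U' hU hU' => hmono ⟨U, hU⟩ ⟨U', hU'⟩⟩
  calc F i ⊆ s.biUnion fun F => univ.biUnion F :=
        (subset_biUnion_of_mem F (mem_univ i)).trans (subset_biUnion_of_mem _ hFs)
    _ ⊆ range N := subset_range_sup_succ _
    _ ⊆ range n := range_subset_range.2 hn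

/-- **Folkman's theorem.** -/
theorem folkman (m r : ℕ) (hm : 0 < m) (hr : 0 < r) :
    ∃ n₀ : ℕ, 0 < n₀ ∧ ∀ n : ℕ, n₀ ≤ n →
      ∀ c : Finset ℕ → Fin r,
      ∃ F : Fin m → Finset ℕ,
        (∀ i, (F i).Nonempty) ∧
        (∀ i, F i ⊆ Finset.range n) ∧
        (∀ i j, i ≠ j → Disjoint (F i) (F j)) ∧
        (∀ i j : Fin m, i < j → (F i).min < (F j).min) ∧
        ∀ U U' : Finset (Fin m), U.Nonempty → U'.Nonempty →
          c (U.biUnion F) = c (U'.biUnion F) :=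
  folkman_general m r
end

section
/- For every choice of positive integers k, κ, m, r with κ ≤ m there exist integers n₀ and q₀ < q₁ < ... < q_m with q₀ = 0 and q_m = n₀ such that: for every integer N ≥ n₀, every finite alphabet Λ with exactly k elements, every two-element subset L of Λ, and every r-coloring c of Λ^N × [{0,...,N-1}]^κ, there exists an m-dimensional variable word w(v₀,...,v_{m-1}) of length N over Λ, with the wildcard set of vᵢ contained in [qᵢ, q_{i+1}) for each i, such that c is L*-insensitive in the κ*-combinatorial subspace generated by w. -/
namespace DR

/-- `c` is `L*`-insensitive in the `κ*`-combinatorial subspace generated by `w`. -/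
def LStarIns (κ : ℕ) {N m r : ℕ} {Λ : Type}
    (c : (Fin N → Λ) → Finset (Fin N) → Fin r) (L : Set Λ)
    (w : Fin N → Λ ⊕ Fin m) : Prop :=
  ∀ lf : Fin m → Fin N, (∀ i, IsFirstOcc w i (lf i)) →
  ∀ F : Finset (Fin m), F.card = κ →
  ∀ a a' : Fin m → Λ, (∀ i ∈ F, a i = a' i) →
    (∀ j : Fin m, a j ∉ L → a j = a' j) → (∀ j : Fin m, a' j ∉ L → a j = a' j) →
    c (subst w a) (F.image lf) = c (subst w a') (F.image lf)

/-- `c` is strongly `*`-insensitive in the `κ*`-combinatorial subspace generated by `w`. -/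
def StrongStarIns (κ : ℕ) {N m r : ℕ} {Λ : Type}
    (c : (Fin N → Λ) → Finset (Fin N) → Fin r)
    (w : Fin N → Λ ⊕ Fin m) : Prop :=
  ∀ lf : Fin m → Fin N, (∀ i, IsFirstOcc w i (lf i)) →
  ∀ F : Finset (Fin m), F.card = κ →
  ∀ a a' : Fin m → Λ, (∀ i ∈ F, a i = a' i) →
    c (subst w a) (F.image lf) = c (subst w a') (F.image lf)

/-- The wildcard set of `v_i` in `w` is contained in `[q i, q (i+1))` for each `i`. -/
def Compatible {N m : ℕ} {Λ : Type} (w : Fin N → Λ ⊕ Fin m) (q : Fin (m + 1) → ℕ) : Prop :=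
  ∀ (j : Fin N) (i : Fin m), w j = Sum.inr i →
    q i.castSucc ≤ (j : ℕ) ∧ (j : ℕ) < q i.succ

/-- The `κ*`-combinatorial subspace generated by `w`, as a subset of
`Λ^N × [{0,...,N-1}]^κ`. -/
def starSubspace (κ : ℕ) {N m : ℕ} {Λ : Type} (w : Fin N → Λ ⊕ Fin m) :
    Set ((Fin N → Λ) × Finset (Fin N)) :=
  {p | (∃ a : Fin m → Λ, p.1 = subst w a) ∧
    ∃ F : Finset (Fin m), F.card = κ ∧
      ∃ lf : Fin m → Fin N, (∀ i, IsFirstOcc w i (lf i)) ∧ p.2 = F.image lf}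


/-!
Shelah's pigeonhole argument, filling the blocks `[Q i, Q (i + 1))` from right to left. When
the block of `vᵢ` is filled, the later blocks are already fixed, so the colour of a point of the
subspace depends on the block contents and otherwise only on boundedly many data: the prefix
below `Q i`, the letters of the variables, the part of the `κ`-set below `Q i` and which later
first occurrences it contains. The block length `E` is the number of colourings of these data,
so two of the fillings `x^j y^(E - j)`, say `j = s < t`, colour them alike; the filling
`x^s vᵢ^(t - s) y^(E - t)` then makes `c` insensitive to swapping `vᵢ` between `x` and `y` for
every prefix, which survives the later filling of the earlier blocks. Changing the letters
outside `F` one at a time gives `L*`-insensitivity.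
-/

open Function

theorem exists_lt_map_eq_of_pow_card_le {D α : Type*} [Fintype D] [Fintype α] (f : ℕ → D → α)
    {n : ℕ} (h : Fintype.card α ^ Fintype.card D ≤ n) :
    ∃ s t, s < t ∧ t ≤ n ∧ f s = f t := by
  classical
  obtain ⟨j, j', hne, heq⟩ := Fintype.exists_ne_map_eq_of_card_lt (fun j : Fin (n + 1) => f j)
    (by rw [Fintype.card_fun, Fintype.card_fin]; omega)
  rcases lt_or_gt_of_ne hne with hlt | hlt
  · exact ⟨j, j', hlt, Nat.lt_succ_iff.mp j'.2, heq⟩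
  · exact ⟨j', j, hlt, Nat.lt_succ_iff.mp j.2, heq.symm⟩

theorem apply_eq_apply_of_update_invariant {ι β α : Type*} [Fintype ι] [DecidableEq ι]
    {f : (ι → β) → α} {P : ι → Prop} {L : Set β}
    (hf : ∀ a i v, P i → a i ∈ L → v ∈ L → f (update a i v) = f a)
    {a a' : ι → β} (h : ∀ i, a i ≠ a' i → P i ∧ a i ∈ L ∧ a' i ∈ L) : f a = f a' := by
  suffices key : ∀ s : Finset ι, ∀ a, (∀ i ∉ s, a i = a' i) →
      (∀ i, a i ≠ a' i → P i ∧ a i ∈ L ∧ a' i ∈ L) → f a = f a' from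
    key Finset.univ a (by simp) h
  intro s
  induction s using Finset.induction_on with
  | empty => exact fun a ha _ => congrArg f (funext fun i => ha i (Finset.notMem_empty i))
  | insert j s _ ih =>
    intro a ha h
    have hstep : f (update a j (a' j)) = f a := by
      by_cases hj : a j = a' j
      · rw [← hj, update_eq_self]
      · exact hf a j (a' j) (h j hj).1 (h j hj).2.1 (h j hj).2.2
    rw [← hstep]
    apply ih
    · intro i hi
      rcases eq_or_ne i j with rfl | hij
      · simp
      · simpa [hij] using ha i (by simp [hij, hi])
    · intro i hi
      rcases eq_or_ne i j with rfl | hij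
      · simp at hi
      · simp only [update_of_ne hij] at hi ⊢
        exact h i hi

section Words

variable {N m : ℕ} {Λ : Type}

def prefixed {q : ℕ} (u : Fin q → Λ) (z : Fin N → Λ) : Fin N → Λ :=
  fun p => if h : (p : ℕ) < q then u ⟨p, h⟩ else z p

theorem prefixed_subst_congr {q : ℕ} (u : Fin q → Λ) {w w' : Fin N → Λ ⊕ Fin m}
    (hw : ∀ p : Fin N, q ≤ p → w p = w' p) (a : Fin m → Λ) :
    prefixed u (subst w a) = prefixed u (subst w' a) := by
  funext p
  by_cases hp : (p : ℕ) < q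
  · simp [prefixed, hp]
  · simp [prefixed, hp, subst, hw p (not_lt.mp hp)]

theorem prefixed_eq_self {q : ℕ} {u : Fin q → Λ} {z : Fin N → Λ}
    (h : ∀ (p : Fin N) (hp : (p : ℕ) < q), u ⟨p, hp⟩ = z p) : prefixed u z = z := by
  funext p
  by_cases hp : (p : ℕ) < q
  · simp [prefixed, hp, h]
  · simp [prefixed, hp]

theorem subst_update_apply_of_ne {w : Fin N → Λ ⊕ Fin m} {i : Fin m} {p : Fin N}
    (hp : w p ≠ .inr i) (a : Fin m → Λ) (v : Λ) :
    subst w (update a i v) p = subst w a p := by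
  rcases hw : w p with b | i'
  · simp [subst, hw]
  · have : i' ≠ i := fun h => hp (h ▸ hw)
    simp [subst, hw, this]

theorem subst_update_of_forall_ne {w : Fin N → Λ ⊕ Fin m} {i : Fin m}
    (hw : ∀ p, w p ≠ .inr i) (a : Fin m → Λ) (v : Λ) : subst w (update a i v) = subst w a :=
  funext fun p => subst_update_apply_of_ne (hw p) a v

def insertBlock (w : Fin N → Λ ⊕ Fin m) (x y : Λ) (i : Fin m) (s t e : ℕ) :
    Fin N → Λ ⊕ Fin m :=
  fun p => if (p : ℕ) < s then .inl x else if (p : ℕ) < t then .inr i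
    else if (p : ℕ) < e then .inl y else w p

section InsertBlock

variable {w : Fin N → Λ ⊕ Fin m} {x y : Λ} {i : Fin m} {s t e : ℕ}

theorem insertBlock_eq_inr {p : Fin N} {i' : Fin m}
    (h : insertBlock w x y i s t e p = .inr i') :
    (i' = i ∧ s ≤ p ∧ (p : ℕ) < t) ∨ (e ≤ p ∧ w p = .inr i') := by
  simp only [insertBlock] at h
  split_ifs at h with h₁ h₂ h₃
  · exact Or.inl ⟨(Sum.inr_injective h).symm, not_lt.mp h₁, h₂⟩
  · exact Or.inr ⟨not_lt.mp h₃, h⟩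

theorem insertBlock_apply_of_le (hst : s ≤ t) (hte : t ≤ e) {p : Fin N} (hp : e ≤ p) :
    insertBlock w x y i s t e p = w p := by
  simp only [insertBlock]
  rw [if_neg (by omega), if_neg (by omega), if_neg (by omega)]

theorem insertBlock_apply_start (hst : s < t) (hs : s < N) :
    insertBlock w x y i s t e ⟨s, hs⟩ = .inr i := by
  simp [insertBlock, hst]

theorem subst_insertBlock_of_eq_left (hst : s ≤ t) {a : Fin m → Λ} (ha : a i = x) :
    subst (insertBlock w x y i s t e) a = subst (insertBlock w x y i t t e) a := by
  funext p
  simp only [subst, insertBlock]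
  split_ifs <;> first | omega | simp [ha]

theorem subst_insertBlock_of_eq_right (hte : t ≤ e) {a : Fin m → Λ} (ha : a i = y) :
    subst (insertBlock w x y i s t e) a = subst (insertBlock w x y i s s e) a := by
  funext p
  simp only [subst, insertBlock]
  split_ifs <;> first | omega | simp [ha]

end InsertBlock

end Words

theorem exists_eq_image_castLE_union_image {N q : ℕ} {ι : Type*} [Fintype ι] (hq : q ≤ N)
    (ℓ : ι → Fin N) {G : Finset (Fin N)} (hG : ∀ p ∈ G, (p : ℕ) < q ∨ ∃ i, p = ℓ i) :
    ∃ (G₀ : Finset (Fin q)) (S : Finset ι), G = G₀.image (Fin.castLE hq) ∪ S.image ℓ := by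
  classical
  refine ⟨Finset.univ.filter (fun p => Fin.castLE hq p ∈ G),
    Finset.univ.filter (fun i => ℓ i ∈ G), ?_⟩
  ext p
  simp only [Finset.mem_union, Finset.mem_image, Finset.mem_filter, Finset.mem_univ, true_and]
  constructor
  · intro hp
    rcases hG p hp with hpq | ⟨i, rfl⟩
    · exact Or.inl ⟨⟨p, hpq⟩, hp, rfl⟩
    · exact Or.inr ⟨i, hp, rfl⟩
  · rintro (⟨p', hp', rfl⟩ | ⟨i, hi, rfl⟩) <;> assumption

section Colorings

variable {N m r : ℕ} {Λ : Type}

theorem exists_lt_forall_color_eq [Fintype Λ] {k : ℕ} (hcard : Fintype.card Λ = k)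
    (c : (Fin N → Λ) → Finset (Fin N) → Fin r) {q : ℕ} (hq : q ≤ N) (ℓ : Fin m → Fin N)
    (z : ℕ → (Fin m → Λ) → Fin N → Λ) {n : ℕ}
    (hn : r ^ (k ^ (q + m) * 2 ^ (q + m)) ≤ n) :
    ∃ s t, s < t ∧ t ≤ n ∧ ∀ (u : Fin q → Λ) (a : Fin m → Λ) (G : Finset (Fin N)),
      (∀ p ∈ G, (p : ℕ) < q ∨ ∃ i, p = ℓ i) →
        c (prefixed u (z s a)) G = c (prefixed u (z t a)) G := by
  let f : ℕ → (Fin q → Λ) × (Fin m → Λ) × Finset (Fin q) × Finset (Fin m) → Fin r :=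
    fun j d => c (prefixed d.1 (z j d.2.1)) (d.2.2.1.image (Fin.castLE hq) ∪ d.2.2.2.image ℓ)
  have hcardD : Fintype.card ((Fin q → Λ) × (Fin m → Λ) × Finset (Fin q) × Finset (Fin m))
      = k ^ (q + m) * 2 ^ (q + m) := by
    simp only [Fintype.card_prod, Fintype.card_fun, Fintype.card_finset, Fintype.card_fin, hcard]
    ring
  obtain ⟨s, t, hst, htn, hf⟩ :=
    exists_lt_map_eq_of_pow_card_le (n := n) f (by rwa [hcardD, Fintype.card_fin])
  refine ⟨s, t, hst, htn, fun u a G hG => ?_⟩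
  obtain ⟨G₀, S, rfl⟩ := exists_eq_image_castLE_union_image hq ℓ hG
  exact congrFun hf (u, a, G₀, S)

/-- The prefix `u` below the block start `q` is arbitrary so that the property survives when the
earlier blocks are filled in later. -/
def SwapInsensitive (c : (Fin N → Λ) → Finset (Fin N) → Fin r) (x y : Λ)
    (w : Fin N → Λ ⊕ Fin m) (ℓ : Fin m → Fin N) (q : ℕ) (i : Fin m) : Prop :=
  ∀ (u : Fin q → Λ) (a : Fin m → Λ) (G : Finset (Fin N)),
    (∀ p ∈ G, (p : ℕ) < q ∨ ∃ i', i < i' ∧ p = ℓ i') →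
      c (prefixed u (subst w (update a i x))) G = c (prefixed u (subst w (update a i y))) G

namespace SwapInsensitive

variable {c : (Fin N → Λ) → Finset (Fin N) → Fin r} {x y : Λ} {w w' : Fin N → Λ ⊕ Fin m}
  {ℓ ℓ' : Fin m → Fin N} {q : ℕ} {i : Fin m}

theorem congr (h : SwapInsensitive c x y w ℓ q i) (hw : ∀ p : Fin N, q ≤ p → w' p = w p)
    (hℓ : ∀ i', i < i' → ℓ' i' = ℓ i') : SwapInsensitive c x y w' ℓ' q i := by
  intro u a G hG
  rw [prefixed_subst_congr u hw, prefixed_subst_congr u hw]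
  refine h u a G fun p hp => ?_
  rcases hG p hp with hpq | ⟨i', hi', rfl⟩
  · exact Or.inl hpq
  · exact Or.inr ⟨i', hi', hℓ i' hi'⟩

theorem color_update_eq (h : SwapInsensitive c x y w ℓ q i) (hq : q ≤ N)
    (hw : ∀ p : Fin N, (p : ℕ) < q → w p ≠ .inr i) (a : Fin m → Λ) {G : Finset (Fin N)}
    (hG : ∀ p ∈ G, (p : ℕ) < q ∨ ∃ i', i < i' ∧ p = ℓ i') :
    c (subst w (update a i x)) G = c (subst w (update a i y)) G := by
  have hprefix : ∀ v, prefixed (fun p => subst w a (Fin.castLE hq p)) (subst w (update a i v))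
      = subst w (update a i v) := fun v =>
    prefixed_eq_self fun p hp => (subst_update_apply_of_ne (hw p hp) a v).symm
  simpa only [hprefix] using h (fun p => subst w a (Fin.castLE hq p)) a G hG

end SwapInsensitive

end Colorings

/-- The block of `vⱼ` has length `r ^ (k ^ (Q j + m) * 2 ^ (Q j + m))`: the number of
`r`-colourings of the data in `exists_lt_forall_color_eq` for `q = Q j`. -/
def shelahBound (k m r : ℕ) : ℕ → ℕ
  | 0 => 0
  | j + 1 => shelahBound k m r j +
      r ^ (k ^ (shelahBound k m r j + m) * 2 ^ (shelahBound k m r j + m))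

theorem shelahBound_strictMono {k m r : ℕ} (hr : 0 < r) : StrictMono (shelahBound k m r) :=
  strictMono_nat_of_lt_succ fun _ => Nat.lt_add_of_pos_right (pow_pos hr _)

section ShelahWord

variable {N m r : ℕ} {Λ : Type}

/-- The state of the construction once the blocks of `vᵢ, …, v_{m-1}` are placed. -/
structure IsShelahWordFrom (c : (Fin N → Λ) → Finset (Fin N) → Fin r) (x y : Λ) (Q : ℕ → ℕ)
    (i : ℕ) (w : Fin N → Λ ⊕ Fin m) (ℓ : Fin m → Fin N) : Prop where
  mem_block : ∀ p i', w p = .inr i' → i ≤ i' ∧ Q i' ≤ p ∧ (p : ℕ) < Q (i' + 1)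
  isFirstOcc : ∀ i' : Fin m, i ≤ i' → IsFirstOcc w i' (ℓ i')
  swapInsensitive : ∀ i' : Fin m, i ≤ i' → SwapInsensitive c x y w ℓ (Q i') i'

namespace IsShelahWordFrom

variable {c : (Fin N → Λ) → Finset (Fin N) → Fin r} {x y : Λ} {Q : ℕ → ℕ}
  {w : Fin N → Λ ⊕ Fin m} {ℓ : Fin m → Fin N}

theorem const (ℓ : Fin m → Fin N) : IsShelahWordFrom c x y Q m (fun _ => .inl x) ℓ where
  mem_block _ _ h := Sum.inl_ne_inr h |>.elim
  isFirstOcc i' hi' := absurd i'.2 (not_lt.mpr hi')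
  swapInsensitive i' hi' := absurd i'.2 (not_lt.mpr hi')

theorem apply_ne_inr {i : ℕ} (hw : IsShelahWordFrom c x y Q i w ℓ) {i' : Fin m}
    (hi' : (i' : ℕ) < i) (p : Fin N) : w p ≠ .inr i' :=
  fun h => absurd (hw.mem_block p i' h).1 (not_le.mpr hi')

section InsertBlock

variable {i : Fin m} {s t : ℕ}

theorem insertBlock_mem_block (hw : IsShelahWordFrom c x y Q (i + 1) w ℓ) (hs : Q i ≤ s)
    (ht : t ≤ Q (i + 1)) {p : Fin N} {i' : Fin m}
    (h : insertBlock w x y i s t (Q (i + 1)) p = .inr i') :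
    (i : ℕ) ≤ i' ∧ Q i' ≤ p ∧ (p : ℕ) < Q (i' + 1) := by
  rcases insertBlock_eq_inr h with ⟨rfl, hsp, hpt⟩ | ⟨-, hp⟩
  · exact ⟨le_rfl, hs.trans hsp, hpt.trans_le ht⟩
  · obtain ⟨hi', hblock⟩ := hw.mem_block p i' hp
    exact ⟨by omega, hblock⟩

theorem insertBlock_isFirstOcc (hw : IsShelahWordFrom c x y Q (i + 1) w ℓ) (hQ : Monotone Q)
    (hs : Q i ≤ s) (hst : s < t) (ht : t ≤ Q (i + 1)) (hsN : s < N) {i' : Fin m}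
    (hi' : (i : ℕ) ≤ i') :
    IsFirstOcc (insertBlock w x y i s t (Q (i + 1))) i' (update ℓ i ⟨s, hsN⟩ i') := by
  rcases eq_or_ne i' i with rfl | hne
  · refine ⟨by simpa using insertBlock_apply_start hst hsN, fun p hp => ?_⟩
    rcases insertBlock_eq_inr hp with ⟨-, hsp, -⟩ | ⟨-, hp⟩
    · simpa [Fin.le_def] using hsp
    · exact absurd hp (hw.apply_ne_inr (Nat.lt_succ_self _) p)
  · have hi' : (i : ℕ) + 1 ≤ i' := Nat.lt_of_le_of_ne hi' (fun h => hne (Fin.ext h.symm))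
    have hfirst := hw.isFirstOcc i' hi'
    have hℓ : Q (i + 1) ≤ ℓ i' := (hQ hi').trans (hw.mem_block _ i' hfirst.1).2.1
    rw [update_of_ne hne]
    refine ⟨(insertBlock_apply_of_le hst.le ht hℓ).trans hfirst.1, fun p hp => ?_⟩
    rcases insertBlock_eq_inr hp with ⟨rfl, -⟩ | ⟨-, hp⟩
    · exact absurd rfl hne
    · exact hfirst.2 p hp

theorem insertBlock_swapInsensitive (hw : IsShelahWordFrom c x y Q (i + 1) w ℓ)
    (hst : s < t) (ht : t ≤ Q (i + 1)) (hsN : s < N)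
    (hcol : ∀ (u : Fin (Q i) → Λ) (a : Fin m → Λ) (G : Finset (Fin N)),
      (∀ p ∈ G, (p : ℕ) < Q i ∨ ∃ i', p = ℓ i') →
        c (prefixed u (subst (insertBlock w x y i s s (Q (i + 1))) a)) G =
          c (prefixed u (subst (insertBlock w x y i t t (Q (i + 1))) a)) G) :
    SwapInsensitive c x y (insertBlock w x y i s t (Q (i + 1))) (update ℓ i ⟨s, hsN⟩)
      (Q i) i := by
  have hfree : ∀ j p, insertBlock w x y i j j (Q (i + 1)) p ≠ .inr i := fun j p h => by
    rcases insertBlock_eq_inr h with ⟨-, hjp, hpj⟩ | ⟨-, hp⟩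
    · omega
    · exact hw.apply_ne_inr (Nat.lt_succ_self _) p hp
  intro u a G hG
  rw [subst_insertBlock_of_eq_left hst.le (update_self i x a),
    subst_insertBlock_of_eq_right ht (update_self i y a),
    subst_update_of_forall_ne (hfree t), subst_update_of_forall_ne (hfree s)]
  refine (hcol u a G fun p hp => ?_).symm
  rcases hG p hp with hpq | ⟨i', hi', rfl⟩
  · exact Or.inl hpq
  · exact Or.inr ⟨i', update_of_ne hi'.ne' _ _⟩

theorem insertBlock (hw : IsShelahWordFrom c x y Q (i + 1) w ℓ) (hQ : Monotone Q)
    (hs : Q i ≤ s) (hst : s < t) (ht : t ≤ Q (i + 1)) (hsN : s < N)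
    (hcol : ∀ (u : Fin (Q i) → Λ) (a : Fin m → Λ) (G : Finset (Fin N)),
      (∀ p ∈ G, (p : ℕ) < Q i ∨ ∃ i', p = ℓ i') →
        c (prefixed u (subst (DR.insertBlock w x y i s s (Q (i + 1))) a)) G =
          c (prefixed u (subst (DR.insertBlock w x y i t t (Q (i + 1))) a)) G) :
    IsShelahWordFrom c x y Q i (DR.insertBlock w x y i s t (Q (i + 1)))
      (update ℓ i ⟨s, hsN⟩) where
  mem_block _ _ h := hw.insertBlock_mem_block hs ht h
  isFirstOcc _ hi' := hw.insertBlock_isFirstOcc hQ hs hst ht hsN hi'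
  swapInsensitive i' hi' := by
    rcases eq_or_ne i' i with rfl | hne
    · exact hw.insertBlock_swapInsensitive hst ht hsN hcol
    · have hi' : (i : ℕ) + 1 ≤ i' := Nat.lt_of_le_of_ne hi' (fun h => hne (Fin.ext h.symm))
      refine (hw.swapInsensitive i' hi').congr (fun p hp => ?_) (fun i'' hi'' => ?_)
      · exact insertBlock_apply_of_le hst.le ht ((hQ hi').trans hp)
      · exact update_of_ne (by omega : i'' ≠ i) _ _

end InsertBlock

theorem isVarWordM (hw : IsShelahWordFrom c x y Q 0 w ℓ) (hQ : Monotone Q) : IsVarWordM w := by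
  refine ⟨fun i => ⟨ℓ i, (hw.isFirstOcc i (Nat.zero_le _)).1⟩, fun j j' i i' hj hj' hii' => ?_⟩
  have hQii' : Q (i + 1) ≤ Q i' := hQ (Nat.succ_le_of_lt hii')
  have hj := (hw.mem_block j i hj).2.2
  have hj' := (hw.mem_block j' i' hj').2.1
  exact Fin.lt_def.mpr (by omega)

theorem compatible (hw : IsShelahWordFrom c x y Q 0 w ℓ) :
    Compatible w (fun i : Fin (m + 1) => Q i) := fun j i h => by
  simpa using (hw.mem_block j i h).2

theorem color_update_eq_of_notMem (hw : IsShelahWordFrom c x y Q 0 w ℓ) (hQ : Monotone Q)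
    (hQN : Q m ≤ N) {F : Finset (Fin m)} {i : Fin m} (hi : i ∉ F) {a : Fin m → Λ}
    (ha : a i ∈ ({x, y} : Set Λ)) {v : Λ} (hv : v ∈ ({x, y} : Set Λ)) :
    c (subst w (update a i v)) (F.image ℓ) = c (subst w a) (F.image ℓ) := by
  have hswap : ∀ b,
      c (subst w (update b i x)) (F.image ℓ) = c (subst w (update b i y)) (F.image ℓ) := by
    refine fun b => (hw.swapInsensitive i (Nat.zero_le _)).color_update_eq
      ((hQ i.2.le).trans hQN) (fun p hp h => absurd (hw.mem_block p i h).2.1 (not_le.mpr hp)) b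
      fun p hp => ?_
    obtain ⟨i', hi', rfl⟩ := Finset.mem_image.mp hp
    rcases lt_or_gt_of_ne (show i' ≠ i from fun h => hi (h ▸ hi')) with hlt | hlt
    · exact Or.inl ((hw.mem_block _ i' (hw.isFirstOcc i' (Nat.zero_le _)).1).2.2.trans_le
        (hQ (Nat.succ_le_of_lt hlt)))
    · exact Or.inr ⟨i', hlt, rfl⟩
  have hpair : ∀ v v' : Λ, v ∈ ({x, y} : Set Λ) → v' ∈ ({x, y} : Set Λ) →
      c (subst w (update a i v)) (F.image ℓ) = c (subst w (update a i v')) (F.image ℓ) := by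
    rintro v v' (rfl | rfl) (rfl | rfl)
    exacts [rfl, hswap a, (hswap a).symm, rfl]
  simpa using hpair v (a i) hv ha

theorem lStarIns (κ : ℕ) (hw : IsShelahWordFrom c x y Q 0 w ℓ) (hQ : Monotone Q)
    (hQN : Q m ≤ N) : LStarIns κ c {x, y} w := by
  intro lf hlf F _ a a' hF ha ha'
  obtain rfl : lf = ℓ := funext fun i =>
    le_antisymm ((hlf i).2 _ (hw.isFirstOcc i (Nat.zero_le _)).1)
      ((hw.isFirstOcc i (Nat.zero_le _)).2 _ (hlf i).1)
  refine apply_eq_apply_of_update_invariant (f := fun a => c (subst w a) (F.image lf))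
    (fun a i v hi ha hv => hw.color_update_eq_of_notMem hQ hQN hi ha hv) fun i hne => ?_
  exact ⟨fun hi => hne (hF i hi), not_imp_comm.mp (ha i) hne, not_imp_comm.mp (ha' i) hne⟩

end IsShelahWordFrom

end ShelahWord

theorem exists_isShelahWordFrom_zero {k N m r : ℕ} {Λ : Type} [Fintype Λ]
    (hcard : Fintype.card Λ = k) (c : (Fin N → Λ) → Finset (Fin N) → Fin r) (x y : Λ)
    (hN : shelahBound k m r m ≤ N) (hN₀ : 0 < N) (hr : 0 < r) :
    ∃ (w : Fin N → Λ ⊕ Fin m) (ℓ : Fin m → Fin N),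
      IsShelahWordFrom c x y (shelahBound k m r) 0 w ℓ := by
  have hQ : Monotone (shelahBound k m r) := (shelahBound_strictMono hr).monotone
  refine Nat.decreasingInduction
    (motive := fun i _ => ∃ w ℓ, IsShelahWordFrom c x y (shelahBound k m r) i w ℓ)
    (fun i hi ⟨w, ℓ, hw⟩ => ?_) ⟨_, fun _ => ⟨0, hN₀⟩, .const _⟩ (Nat.zero_le m)
  set Q := shelahBound k m r
  have hQsucc : Q (i + 1) = Q i + r ^ (k ^ (Q i + m) * 2 ^ (Q i + m)) := rfl
  have hQN : Q (i + 1) ≤ N := (hQ hi).trans hN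
  obtain ⟨s, t, hst, ht, hcol⟩ := exists_lt_forall_color_eq hcard c (q := Q i) (by omega) ℓ
    (fun j => subst (insertBlock w x y ⟨i, hi⟩ (Q i + j) (Q i + j) (Q (i + 1)))) le_rfl
  have hs : Q i ≤ Q i + s := Nat.le_add_right _ _
  have hst' : Q i + s < Q i + t := by omega
  have ht' : Q i + t ≤ Q (i + 1) := by omega
  have hsN : Q i + s < N := by omega
  exact ⟨_, _, hw.insertBlock (i := ⟨i, hi⟩) hQ hs hst' ht' hsN hcol⟩

theorem shelah_star_general (k κ m r : ℕ) (hm : 0 < m) (hr : 0 < r) :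
    ∃ (n₀ : ℕ) (q : Fin (m + 1) → ℕ), 0 < n₀ ∧ StrictMono q ∧
      q 0 = 0 ∧ q (Fin.last m) = n₀ ∧
      ∀ N : ℕ, n₀ ≤ N → ∀ (Λ : Type) [Fintype Λ], Fintype.card Λ = k →
        ∀ L : Finset Λ, L.card = 2 →
        ∀ c : (Fin N → Λ) → Finset (Fin N) → Fin r,
        ∃ w : Fin N → Λ ⊕ Fin m, IsVarWordM w ∧ Compatible w q ∧
          LStarIns κ c (↑L : Set Λ) w := by
  classical
  have hQ := shelahBound_strictMono (k := k) (m := m) hr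
  have hpos : 0 < shelahBound k m r m := hQ hm
  refine ⟨shelahBound k m r m, fun i => shelahBound k m r i, hpos, hQ.comp Fin.val_strictMono,
    rfl, rfl, fun N hN Λ _ hcard L hL c => ?_⟩
  obtain ⟨x, y, -, rfl⟩ := Finset.card_eq_two.mp hL
  obtain ⟨w, ℓ, hw⟩ := exists_isShelahWordFrom_zero hcard c x y hN (hpos.trans_le hN) hr
  exact ⟨w, hw.isVarWordM hQ.monotone, hw.compatible, by
    simpa using hw.lStarIns κ hQ.monotone hN⟩

/-- **Starred variant of Shelah's insensitivity lemma** (Lemma 7.3 of the paper). -/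
theorem shelah_star (k κ m r : ℕ) (hk : 0 < k) (hκ : 0 < κ) (hm : 0 < m) (hr : 0 < r)
    (hκm : κ ≤ m) :
    ∃ (n₀ : ℕ) (q : Fin (m + 1) → ℕ), 0 < n₀ ∧ StrictMono q ∧
      q 0 = 0 ∧ q (Fin.last m) = n₀ ∧
      ∀ N : ℕ, n₀ ≤ N → ∀ (Λ : Type) [Fintype Λ], Fintype.card Λ = k →
        ∀ L : Finset Λ, L.card = 2 →
        ∀ c : (Fin N → Λ) → Finset (Fin N) → Fin r,
        ∃ w : Fin N → Λ ⊕ Fin m, IsVarWordM w ∧ Compatible w q ∧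
          LStarIns κ c (↑L : Set Λ) w :=
  shelah_star_general k κ m r hm hr

end DR
end
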